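/- arXiv:2203.17146 — 10 statements merged into one kernel-verified Lean document; each statement's English description precedes it below -/
import Mathlib

section
/- Let (X,d) be a metric space, let x : Fin n → X be the agents with n ≥ 1, and let M ⊆ X be a finite nonempty set of feasible center locations. If k = 1 or k ≥ n − 1, then there exists a k-clustering Y : Fin k → M that is a (1,1)-core clustering (i.e., the core is non-empty). -/
/-- The cost of agent location `p` under the `k`-clustering `Y`:
the minimum distance from `p` to a center of `Y`. -/
noncomputable def clusterCost {X : Type*} [MetricSpace X] {k : ℕ} (Y : Fin k → X) (p : X) : ℝ :=
  sInf (Set.range fun j => dist p (Y j))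

/-! For `k = 1` only the grand coalition can block, so a 1-median is in the core; for `n ≤ k`
every agent gets its nearest feasible center. For `k = n - 1`, let `c i` be the nearest feasible
center of agent `i`, let the regret of agents `T` at `y` be `∑ i ∈ T, (d(x i, y) - d(x i, c i))`,
and merge the pair `T` and center `y` of least regret while every other agent keeps `c i`.
A coalition then has at least two agents, so its regret at any `y'` is at least that of one of its
pairs, which bounds the regret the clustering imposes on it. -/

open Finset

lemma Finset.exists_fin_tuple_superset {α : Type*} {M : Set α} (hM : M.Nonempty) {s : Finset α}
    (hsM : ↑s ⊆ M) {k : ℕ} (hs : #s ≤ k) :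
    ∃ Y : Fin k → α, (∀ j, Y j ∈ M) ∧ ↑s ⊆ Set.range Y := by
  obtain ⟨y₀, hy₀⟩ := hM
  refine ⟨fun j => if h : (j : ℕ) < #s then s.equivFin.symm ⟨j, h⟩ else y₀, fun j => ?_,
    fun a ha => ⟨Fin.castLE hs (s.equivFin ⟨a, ha⟩), by simp⟩⟩
  dsimp only
  split_ifs
  exacts [hsM (s.equivFin.symm _).2, hy₀]

section Clustering

variable {X : Type*} [MetricSpace X] {n k : ℕ}

lemma clusterCost_le_of_mem_range {Y : Fin k → X} {y : X} (hy : y ∈ Set.range Y) (p : X) :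
    clusterCost Y p ≤ dist p y := by
  obtain ⟨j, rfl⟩ := hy
  exact csInf_le ⟨0, by rintro r ⟨j', rfl⟩; exact dist_nonneg⟩ ⟨j, rfl⟩

def IsCoreClustering (x : Fin n → X) (M : Set X) (Y : Fin k → X) : Prop :=
  ∀ S : Finset (Fin n), (n : ℝ) / (k : ℝ) ≤ #S →
    ∀ y' ∈ M, ∑ i ∈ S, clusterCost Y (x i) ≤ ∑ i ∈ S, dist (x i) y'

lemma isCoreClustering_of_median {x : Fin n → X} {M : Set X} {Y : Fin 1 → X}
    (hmed : ∀ y ∈ M, ∑ i, dist (x i) (Y 0) ≤ ∑ i, dist (x i) y) :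
    IsCoreClustering x M Y := by
  intro S hS y' hy'
  obtain rfl : S = univ := eq_univ_of_card S <| by
    have := card_le_univ S
    simp only [Nat.cast_one, div_one, Nat.cast_le, Fintype.card_fin] at hS this ⊢
    omega
  exact (sum_le_sum fun i _ => clusterCost_le_of_mem_range ⟨0, rfl⟩ (x i)).trans (hmed y' hy')

lemma isCoreClustering_of_nearest_mem_range {x : Fin n → X} {M : Set X} {Y : Fin k → X}
    (hY : ∀ i, ∃ y ∈ Set.range Y, ∀ z ∈ M, dist (x i) y ≤ dist (x i) z) :
    IsCoreClustering x M Y := by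
  intro S _ y' hy'
  refine sum_le_sum fun i _ => ?_
  obtain ⟨y, hyY, hy⟩ := hY i
  exact (clusterCost_le_of_mem_range hyY (x i)).trans (hy y' hy')

def regret (x c : Fin n → X) (T : Finset (Fin n)) (y : X) : ℝ :=
  ∑ i ∈ T, (dist (x i) y - dist (x i) (c i))

lemma regret_mono {x c : Fin n → X} {M : Set X} (hc : ∀ i, ∀ z ∈ M, dist (x i) (c i) ≤ dist (x i) z)
    {T T' : Finset (Fin n)} (hT : T ⊆ T') {y : X} (hy : y ∈ M) :
    regret x c T y ≤ regret x c T' y :=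
  sum_le_sum_of_subset_of_nonneg hT fun i _ _ => sub_nonneg.2 (hc i y hy)

lemma exists_minimal_regret_pair (x c : Fin n → X) {M : Set X} (hMfin : M.Finite)
    (hMne : M.Nonempty) (hn : 2 ≤ n) :
    ∃ T : Finset (Fin n), #T = 2 ∧ ∃ y ∈ M,
      ∀ T' : Finset (Fin n), #T' = 2 → ∀ y' ∈ M, regret x c T y ≤ regret x c T' y' := by
  obtain ⟨T₀, -, hT₀⟩ := exists_subset_card_eq (s := (univ : Finset (Fin n))) (by simpa using hn)
  obtain ⟨y₀, hy₀⟩ := hMne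
  obtain ⟨⟨T, y⟩, ⟨hT, hy⟩, hmin⟩ := Set.exists_min_image ({T | #T = 2} ×ˢ M)
    (fun q => regret x c q.1 q.2) ((Set.toFinite _).prod hMfin) ⟨(T₀, y₀), hT₀, hy₀⟩
  exact ⟨T, hT, y, hy, fun T' hT' y' hy' => hmin (T', y') ⟨hT', hy'⟩⟩

lemma isCoreClustering_of_merge {x c : Fin n → X} {M : Set X} {Y : Fin k → X} (hk : 0 < k)
    (hkn : k < n) (hc : ∀ i, ∀ z ∈ M, dist (x i) (c i) ≤ dist (x i) z)
    {T : Finset (Fin n)} {y : X} (hyM : y ∈ M)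
    (hmin : ∀ T' : Finset (Fin n), #T' = 2 → ∀ y' ∈ M, regret x c T y ≤ regret x c T' y')
    (hyY : y ∈ Set.range Y) (hcY : ∀ i ∉ T, c i ∈ Set.range Y) :
    IsCoreClustering x M Y := by
  intro S hS y' hy'
  have hS2 : 2 ≤ #S := by
    have : (1 : ℝ) < n / k := (one_lt_div (by exact_mod_cast hk)).2 (by exact_mod_cast hkn)
    have : 1 < #S := by exact_mod_cast this.trans_le hS
    omega
  obtain ⟨T', hT'S, hT'⟩ := exists_subset_card_eq hS2
  have hexcess : ∀ i, clusterCost Y (x i) - dist (x i) (c i) ≤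
      if i ∈ T then dist (x i) y - dist (x i) (c i) else 0 := fun i => by
    split_ifs with hi
    · linarith [clusterCost_le_of_mem_range hyY (x i)]
    · linarith [clusterCost_le_of_mem_range (hcY i hi) (x i)]
  have key : ∑ i ∈ S, (clusterCost Y (x i) - dist (x i) (c i)) ≤ regret x c S y' :=
    calc ∑ i ∈ S, (clusterCost Y (x i) - dist (x i) (c i))
        ≤ regret x c (S ∩ T) y := by
          rw [regret, ← sum_ite_mem]
          exact sum_le_sum fun i _ => hexcess i
      _ ≤ regret x c T y := regret_mono hc inter_subset_right hyM
      _ ≤ regret x c T' y' := hmin T' hT' y' hy'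
      _ ≤ regret x c S y' := regret_mono hc hT'S hy'
  simp only [regret, sum_sub_distrib] at key
  linarith

end Clustering

theorem stmt1_general {X : Type*} [MetricSpace X] {n k : ℕ} (hk : 0 < k)
    (hcase : k = 1 ∨ n - 1 ≤ k)
    (x : Fin n → X) (M : Set X) (hMfin : M.Finite) (hMne : M.Nonempty) :
    ∃ Y : Fin k → X, (∀ j, Y j ∈ M) ∧
      ∀ S : Finset (Fin n), (n : ℝ) / (k : ℝ) ≤ S.card →
        ∀ y' ∈ M, ∑ i ∈ S, clusterCost Y (x i) ≤ ∑ i ∈ S, dist (x i) y' := by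
  classical
  choose c hcM hc using fun i => M.exists_min_image (dist (x i)) hMfin hMne
  rcases hcase with rfl | hnk
  · obtain ⟨y, hyM, hmed⟩ := M.exists_min_image (fun y => ∑ i, dist (x i) y) hMfin hMne
    exact ⟨fun _ => y, fun _ => hyM, isCoreClustering_of_median hmed⟩
  rcases le_or_gt n k with hnk' | hkn
  · obtain ⟨Y, hYM, hcY⟩ := (univ.image c).exists_fin_tuple_superset hMne
      (by simpa [Set.subset_def] using hcM) (card_image_le.trans (by simpa using hnk'))
    exact ⟨Y, hYM, isCoreClustering_of_nearest_mem_range fun i => ⟨c i, hcY (by simp), hc i⟩⟩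
  · obtain ⟨T, hT, y, hyM, hmin⟩ := exists_minimal_regret_pair x c hMfin hMne (by omega)
    obtain ⟨Y, hYM, hY⟩ := (insert y (Tᶜ.image c)).exists_fin_tuple_superset (k := k) hMne
      (by simpa [Set.insert_subset_iff, Set.subset_def, hyM] using fun i _ => hcM i)
      ((card_insert_le _ _).trans <| by
        have := card_image_le (s := Tᶜ) (f := c)
        rw [card_compl, Fintype.card_fin, hT] at this
        omega)
    exact ⟨Y, hYM, isCoreClustering_of_merge hk hkn hc hyM hmin (hY (by simp))
      fun i hi => hY (mem_insert_of_mem (mem_image_of_mem c (mem_compl.2 hi)))⟩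

theorem stmt1 {X : Type*} [MetricSpace X] {n k : ℕ} (hn : 0 < n) (hk : 0 < k)
    (hcase : k = 1 ∨ n - 1 ≤ k)
    (x : Fin n → X) (M : Set X) (hMfin : M.Finite) (hMne : M.Nonempty) :
    ∃ Y : Fin k → X, (∀ j, Y j ∈ M) ∧
      ∀ S : Finset (Fin n), (n : ℝ) / (k : ℝ) ≤ S.card →
        ∀ y' ∈ M, ∑ i ∈ S, clusterCost Y (x i) ≤ ∑ i ∈ S, dist (x i) y' :=
  stmt1_general hk hcase x M hMfin hMne
end

section
/- Let n ≥ 4 and let (X,d) be a metric space containing points x_1, …, x_n with d(x_i, x_j) = 1 for all i ≠ j. Take the agents to be x : Fin n → X given by these n points and M = {x_1, …, x_n}. Then for every k with n/2 ≤ k ≤ n − 2, every real ε with 0 < ε ≤ 1, and every k-clustering Y : Fin k → M, there exist a set S ⊆ Fin n with |S| ≥ n/k and a point y' ∈ M such that (2 − ε)·Σ_{i∈S} d(x_i, y') < Σ_{i∈S} d(x_i, Y). In particular, no k-clustering of this instance is a (1, 2−ε)-core clustering. -/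
section

open Finset

variable {α ι β : Type*} [Fintype α] [Fintype ι] {x : α → β}

open Classical in
theorem card_filter_mem_range_le (hx : Function.Injective x) (Y : ι → β) :
    #{a | x a ∈ Set.range Y} ≤ Fintype.card ι := by
  calc #{a | x a ∈ Set.range Y}
      = (({a | x a ∈ Set.range Y} : Finset α).map ⟨x, hx⟩).card := (card_map _).symm
    _ ≤ (univ.image Y).card := by
        refine card_le_card fun p hp => ?_
        obtain ⟨a, ha, rfl⟩ := mem_map.mp hp
        obtain ⟨j, hj⟩ := (mem_filter.mp ha).2
        exact mem_image.mpr ⟨j, mem_univ j, hj⟩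
    _ ≤ Fintype.card ι := card_image_le

theorem exists_pair_not_mem_range (hx : Function.Injective x) (Y : ι → β)
    (hcard : Fintype.card ι + 2 ≤ Fintype.card α) :
    ∃ a₁ a₂, a₁ ≠ a₂ ∧ x a₁ ∉ Set.range Y ∧ x a₂ ∉ Set.range Y := by
  classical
  have hcompl : 1 < #{a | x a ∉ Set.range Y} := by
    have := card_filter_add_card_filter_not (s := univ) (fun a => x a ∈ Set.range Y)
    have := card_filter_mem_range_le hx Y
    rw [card_univ] at *
    omega
  obtain ⟨a₁, h₁, a₂, h₂, hne⟩ := one_lt_card.mp hcompl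
  exact ⟨a₁, a₂, hne, (mem_filter.mp h₁).2, (mem_filter.mp h₂).2⟩

end

theorem injective_of_dist_eq_one {X ι : Type*} [PseudoMetricSpace X] {x : ι → X}
    (hx : ∀ i j, i ≠ j → dist (x i) (x j) = 1) : Function.Injective x := by
  intro i j hij
  by_contra hne
  simpa [hij] using hx i j hne

section

variable {X : Type*} [MetricSpace X] {n k : ℕ} [NeZero k]

theorem clusterCost_eq_of_forall_dist_eq {Y : Fin k → X} {p : X} {c : ℝ}
    (h : ∀ j, dist p (Y j) = c) : clusterCost Y p = c := by
  rw [clusterCost, funext h, Set.range_const, csInf_singleton]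

theorem clusterCost_eq_one_of_not_mem_range {x : Fin n → X}
    (hx : ∀ i j, i ≠ j → dist (x i) (x j) = 1) {Y : Fin k → X} (hY : ∀ j, Y j ∈ Set.range x)
    {i : Fin n} (hi : x i ∉ Set.range Y) : clusterCost Y (x i) = 1 := by
  refine clusterCost_eq_of_forall_dist_eq fun j => ?_
  obtain ⟨m, hm⟩ := hY j
  rw [← hm]
  exact hx i m fun him => hi ⟨j, by rw [← hm, him]⟩

end

open Finset in
theorem stmt2_general {X : Type*} [MetricSpace X] {n k : ℕ} (hn : 4 ≤ n)
    (x : Fin n → X) (hx : ∀ i j, i ≠ j → dist (x i) (x j) = 1)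
    (hk1 : (n : ℝ) / 2 ≤ (k : ℝ)) (hk2 : k ≤ n - 2)
    (ε : ℝ) (hε0 : 0 < ε)
    (Y : Fin k → X) (hY : ∀ j, Y j ∈ Set.range x) :
    ∃ S : Finset (Fin n), (n : ℝ) / (k : ℝ) ≤ S.card ∧
      ∃ y' ∈ Set.range x,
        (2 - ε) * ∑ i ∈ S, dist (x i) y' < ∑ i ∈ S, clusterCost Y (x i) := by
  have hnR : (4 : ℝ) ≤ n := by exact_mod_cast hn
  have hkR : (0 : ℝ) < k := by linarith
  have : NeZero k := ⟨by exact_mod_cast hkR.ne'⟩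
  obtain ⟨i₁, i₂, hne, h₁, h₂⟩ := exists_pair_not_mem_range (injective_of_dist_eq_one hx) Y
    (by simp only [Fintype.card_fin]; omega)
  refine ⟨{i₁, i₂}, ?_, x i₁, ⟨i₁, rfl⟩, ?_⟩
  · rw [card_pair hne, div_le_iff₀ hkR]
    push_cast
    linarith
  · rw [sum_pair hne, sum_pair hne, clusterCost_eq_one_of_not_mem_range hx hY h₁,
      clusterCost_eq_one_of_not_mem_range hx hY h₂, dist_self, hx i₂ i₁ hne.symm]
    linarith

theorem stmt2 {X : Type*} [MetricSpace X] {n k : ℕ} (hn : 4 ≤ n)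
    (x : Fin n → X) (hx : ∀ i j, i ≠ j → dist (x i) (x j) = 1)
    (hk1 : (n : ℝ) / 2 ≤ (k : ℝ)) (hk2 : k ≤ n - 2)
    (ε : ℝ) (hε0 : 0 < ε) (hε1 : ε ≤ 1)
    (Y : Fin k → X) (hY : ∀ j, Y j ∈ Set.range x) :
    ∃ S : Finset (Fin n), (n : ℝ) / (k : ℝ) ≤ S.card ∧
      ∃ y' ∈ Set.range x,
        (2 - ε) * ∑ i ∈ S, dist (x i) y' < ∑ i ∈ S, clusterCost Y (x i) :=
  stmt2_general hn x hx hk1 hk2 ε hε0 Y hY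
end

section
/- Let k ≥ 2 and n = k(k+1), and let x : Fin n → ℝ place exactly k agents at each of the integer points 1, 2, …, k+1 of the real line. Then for every k-clustering Y : Fin k → ℝ there exist a set S ⊆ Fin n with |S| ≥ n/k (= k+1) and a point y' ∈ ℝ such that Σ_{i∈S} |x_i − y'| > 0 and Σ_{i∈S} min_{j<k} |x_i − Y_j| ≥ (k/2)·Σ_{i∈S} |x_i − y'|. In particular, for every real β with 1 ≤ β < k/2, no k-clustering of this line instance is a (1, β)-core clustering. -/
/-!
Among the `k + 1` occupied locations, which are pairwise at distance at least `1`, two would share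
a center if all of them were within `1/2` of `Y`; so some location `p` has cost at least `1/2`. The
`k` agents at `p` together with one agent at a neighbouring location deviate to `y' = p`: their
total distance to `p` is `1`, while their total cost under `Y` is at least `k / 2`.
-/

open scoped Classical

section ClusterCost

variable {X : Type*} [MetricSpace X] {k : ℕ}

lemma clusterCost_nonneg (Y : Fin k → X) (p : X) : 0 ≤ clusterCost Y p :=
  Real.sInf_nonneg (by rintro _ ⟨j, rfl⟩; exact dist_nonneg)

lemma exists_clusterCost_eq_dist (hk : 0 < k) (Y : Fin k → X) (p : X) :
    ∃ j, clusterCost Y p = dist p (Y j) := by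
  have hne : (Set.range fun j => dist p (Y j)).Nonempty := ⟨_, ⟨⟨0, hk⟩, rfl⟩⟩
  obtain ⟨j, hj⟩ := hne.csInf_mem (Set.finite_range _)
  exact ⟨j, hj.symm⟩

lemma exists_half_le_clusterCost_of_pairwise_le_dist {ι : Type*} [Fintype ι] (hk : 0 < k)
    (hcard : k < Fintype.card ι) {p : ι → X} {δ : ℝ}
    (hp : Pairwise fun a b => δ ≤ dist (p a) (p b)) (Y : Fin k → X) :
    ∃ a, δ / 2 ≤ clusterCost Y (p a) := by
  by_contra! hsmall
  have hnear : ∀ a, ∃ j, dist (p a) (Y j) < δ / 2 := fun a => by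
    obtain ⟨j, hj⟩ := exists_clusterCost_eq_dist hk Y (p a)
    exact ⟨j, hj ▸ hsmall a⟩
  choose j hj using hnear
  obtain ⟨a, b, hab, hjab⟩ :=
    Fintype.exists_ne_map_eq_of_card_lt j (by rwa [Fintype.card_fin])
  have hb : dist (p b) (Y (j a)) < δ / 2 := hjab ▸ hj b
  linarith [hp hab, dist_triangle_right (p a) (p b) (Y (j a)), hj a]

end ClusterCost

lemma pairwise_one_le_dist_natCast_add_one (k : ℕ) :
    Pairwise fun a b : Fin k => (1 : ℝ) ≤ dist (((a : ℕ) : ℝ) + 1) (((b : ℕ) : ℝ) + 1) := by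
  intro a b hab
  rw [dist_add_right, Nat.dist_cast_real]
  exact Nat.pairwise_one_le_dist (Fin.val_injective.ne hab)

lemma exists_dist_natCast_add_one_eq_one {k : ℕ} (hk : 0 < k) (a : Fin (k + 1)) :
    ∃ b : Fin (k + 1), dist (((b : ℕ) : ℝ) + 1) (((a : ℕ) : ℝ) + 1) = 1 := by
  rcases Nat.lt_or_ge ((a : ℕ) + 1) (k + 1) with h | h
  · refine ⟨⟨(a : ℕ) + 1, h⟩, ?_⟩
    simp
  · refine ⟨⟨(a : ℕ) - 1, by omega⟩, ?_⟩
    rw [Real.dist_eq, Nat.cast_sub (by omega : 1 ≤ (a : ℕ))]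
    norm_num

lemma sum_insert_eq_add_card_smul {ι α M : Type*} [DecidableEq ι] [AddCommMonoid M]
    {x : ι → α} (f : α → M) {T : Finset ι} {p : α} (hT : ∀ i ∈ T, x i = p) {i₀ : ι}
    (hi₀ : i₀ ∉ T) : ∑ i ∈ insert i₀ T, f (x i) = f (x i₀) + T.card • f p := by
  rw [Finset.sum_insert hi₀, ← Finset.sum_const]
  exact congrArg _ (Finset.sum_congr rfl fun i hi => by rw [hT i hi])

theorem stmt3_general {n k : ℕ} (hk : 2 ≤ k) (hn : n = k * (k + 1))
    (x : Fin n → ℝ)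
    (hx : ∀ m : Fin (k + 1), (Finset.univ.filter fun i => x i = ((m : ℕ) : ℝ) + 1).card = k)
    (Y : Fin k → ℝ) :
    ∃ S : Finset (Fin n), (n : ℝ) / (k : ℝ) ≤ S.card ∧
      ∃ y' : ℝ, 0 < ∑ i ∈ S, |x i - y'| ∧
        ((k : ℝ) / 2) * ∑ i ∈ S, |x i - y'| ≤ ∑ i ∈ S, clusterCost Y (x i) := by
  have hk0 : 0 < k := by omega
  obtain ⟨m, hm⟩ := exists_half_le_clusterCost_of_pairwise_le_dist hk0 (by simp)
    (pairwise_one_le_dist_natCast_add_one (k + 1)) Y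
  obtain ⟨m', hm'⟩ := exists_dist_natCast_add_one_eq_one hk0 m
  obtain ⟨i₀, hi₀⟩ : (Finset.univ.filter fun i => x i = ((m' : ℕ) : ℝ) + 1).Nonempty := by
    rw [← Finset.card_pos, hx m']
    exact hk0
  have hxi₀ : x i₀ = ((m' : ℕ) : ℝ) + 1 := (Finset.mem_filter.mp hi₀).2
  set p : ℝ := ((m : ℕ) : ℝ) + 1
  set T := Finset.univ.filter fun i => x i = p
  have hT : ∀ i ∈ T, x i = p := fun i hi => (Finset.mem_filter.mp hi).2
  have hi₀T : i₀ ∉ T := fun hi => by simp [← hxi₀, hT i₀ hi] at hm'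
  have hdist : ∑ i ∈ insert i₀ T, |x i - p| = 1 := by
    rw [sum_insert_eq_add_card_smul (|· - p|) hT hi₀T, hxi₀, ← Real.dist_eq, hm']
    simp
  have hcost : ∑ i ∈ insert i₀ T, clusterCost Y (x i) =
      clusterCost Y (x i₀) + k * clusterCost Y p := by
    rw [sum_insert_eq_add_card_smul (clusterCost Y) hT hi₀T, hx m, nsmul_eq_mul]
  refine ⟨insert i₀ T, ?_, p, by rw [hdist]; exact one_pos, ?_⟩
  · rw [Finset.card_insert_of_notMem hi₀T, hx m, hn, div_le_iff₀ (by positivity)]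
    push_cast
    exact le_of_eq (by ring)
  · rw [hdist, hcost]
    nlinarith [clusterCost_nonneg Y (x i₀)]

theorem stmt3 {n k : ℕ} (hk : 2 ≤ k) (hn : n = k * (k + 1))
    (x : Fin n → ℝ)
    (hx : ∀ m : Fin (k + 1), (Finset.univ.filter fun i => x i = ((m : ℕ) : ℝ) + 1).card = k)
    (hx' : ∀ i, ∃ m : Fin (k + 1), x i = ((m : ℕ) : ℝ) + 1)
    (Y : Fin k → ℝ) :
    ∃ S : Finset (Fin n), (n : ℝ) / (k : ℝ) ≤ S.card ∧
      ∃ y' : ℝ, 0 < ∑ i ∈ S, |x i - y'| ∧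
        ((k : ℝ) / 2) * ∑ i ∈ S, |x i - y'| ≤ ∑ i ∈ S, clusterCost Y (x i) :=
  stmt3_general hk hn x hx Y
end

section
/- Let n > k ≥ 1 and let x : Fin n → ℝ be agents on the real line. Then there exists a k-clustering Y : Fin k → ℝ that is a (1, ⌈n/k⌉ − 1)-core clustering; that is, for every set S ⊆ Fin n with |S| ≥ n/k and every point y' ∈ ℝ, one has (⌈n/k⌉ − 1)·Σ_{i∈S} |x_i − y'| ≥ Σ_{i∈S} min_{j<k} |x_i − Y_j|. -/
open Finset

section Steps

variable {v : ℕ → ℝ}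

theorem sum_sub_eq_sum_card_mul_step {α : Type*} (T : Finset α) (lo hi : α → ℕ) {N : ℕ}
    (h : ∀ t ∈ T, lo t ≤ hi t ∧ hi t ≤ N) :
    ∑ t ∈ T, (v (hi t) - v (lo t)) =
      ∑ r ∈ range N, (#{t ∈ T | lo t ≤ r ∧ r < hi t} : ℝ) * (v (r + 1) - v r) := by
  have hwindow : ∀ t ∈ T, v (hi t) - v (lo t) =
      ∑ r ∈ range N, if lo t ≤ r ∧ r < hi t then v (r + 1) - v r else 0 := by
    intro t ht
    rw [← sum_filter, ← sum_Ico_sub v (h t ht).1]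
    congr 1
    ext r
    simp only [mem_filter, mem_range, mem_Ico]
    have := h t ht
    omega
  rw [sum_congr rfl hwindow, sum_comm]
  refine sum_congr rfl fun r _ => ?_
  rw [← sum_filter, sum_const, nsmul_eq_mul]

theorem sum_min_mul_step_le_sum_abs_sub (s : ℕ) (y : ℝ) :
    ∑ r ∈ range (s - 1), (min (r + 1) (s - 1 - r) : ℕ) * (v (r + 1) - v r) ≤
      ∑ t ∈ range s, |v t - y| := by
  rcases Nat.eq_zero_or_pos s with rfl | hs
  · simp
  have hpairs := sum_sub_eq_sum_card_mul_step (v := v) (range (s / 2)) (fun t => t)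
    (fun t => s - 1 - t) (N := s - 1) (by intro t ht; simp only [mem_range] at ht; omega)
  have hcount : ∀ r ∈ range (s - 1),
      #{t ∈ range (s / 2) | t ≤ r ∧ r < s - 1 - t} = min (r + 1) (s - 1 - r) := by
    intro r hr
    rw [← card_range (min (r + 1) (s - 1 - r))]
    congr 1
    ext t
    simp only [mem_filter, mem_range] at hr ⊢
    omega
  have hpair : ∀ t, v (s - 1 - t) - v t ≤ |v t - y| + |v (s - 1 - t) - y| := fun t => by
    linarith [le_abs_self (v (s - 1 - t) - y), neg_abs_le (v t - y)]
  have hreflect :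
      ∑ t ∈ range (s / 2), |v (s - 1 - t) - y| = ∑ t ∈ Ico (s - s / 2) s, |v t - y| := by
    rw [range_eq_Ico, sum_Ico_reflect (fun t => |v t - y|) 0 (by omega)]
    congr 2 <;> omega
  calc _ = ∑ r ∈ range (s - 1), (#{t ∈ range (s / 2) | t ≤ r ∧ r < s - 1 - t} : ℝ) *
        (v (r + 1) - v r) := sum_congr rfl fun r hr => by rw [hcount r hr]
    _ = ∑ t ∈ range (s / 2), (v (s - 1 - t) - v t) := hpairs.symm
    _ ≤ ∑ t ∈ range (s / 2), (|v t - y| + |v (s - 1 - t) - y|) := sum_le_sum fun t _ => hpair t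
    _ = ∑ t ∈ range (s / 2), |v t - y| + ∑ t ∈ Ico (s - s / 2) s, |v t - y| := by
      rw [sum_add_distrib, hreflect]
    _ ≤ ∑ t ∈ range (s / 2), |v t - y| + ∑ t ∈ Ico (s / 2) s, |v t - y| := by
      gcongr
      omega
    _ = ∑ t ∈ range s, |v t - y| := sum_range_add_sum_Ico _ (by omega)

theorem sum_abs_sub_le_mul_sub_of_mem_Icc (hv : Monotone v) {m : ℕ} (hm : 2 ≤ m) {c : ℝ}
    (hc : c ∈ Set.Icc (v 0) (v (m - 1))) :
    ∑ t ∈ range m, |v t - c| ≤ ((m : ℝ) - 1) * (v (m - 1) - v 0) := by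
  have hsplit : ∑ t ∈ range m, |v t - c| =
      |v 0 - c| + |v (m - 1) - c| + ∑ t ∈ Ico 1 (m - 1), |v t - c| := by
    rw [← sum_range_add_sum_Ico _ (show 1 ≤ m by omega), ← sum_Ico_consecutive _
      (show 1 ≤ m - 1 by omega) (show m - 1 ≤ m by omega), Nat.Ico_pred_singleton (by omega)]
    simp only [sum_range_one, sum_singleton]
    ring
  have hends : |v 0 - c| + |v (m - 1) - c| = v (m - 1) - v 0 := by
    rw [abs_of_nonpos (by linarith [hc.1]), abs_of_nonneg (by linarith [hc.2])]
    ring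
  have hmiddle : ∀ t ∈ Ico 1 (m - 1), |v t - c| ≤ v (m - 1) - v 0 := by
    intro t ht
    have h0 := hv (Nat.zero_le t)
    have h1 := hv (mem_Ico.1 ht).2.le
    rw [abs_le]
    constructor <;> linarith [hc.1, hc.2]
  have hcard : ((#(Ico 1 (m - 1)) : ℕ) : ℝ) = m - 2 := by
    rw [Nat.card_Ico, Nat.cast_sub (by omega), Nat.cast_sub (by omega)]
    ring
  rw [hsplit, hends]
  have := sum_le_card_nsmul _ _ _ hmiddle
  rw [nsmul_eq_mul, hcard] at this
  linarith

theorem card_shared_add_card_window_le {m s r : ℕ} (hm : 2 ≤ m) (hr : r < s - 1) :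
    #{_t ∈ range (m - 1) | 0 ≤ r ∧ r < m - 1} + #{t ∈ Ico m s | t + 1 - m ≤ r ∧ r < t} ≤
      (m - 1) * min (r + 1) (s - 1 - r) := by
  have hwindow :
      {t ∈ Ico m s | t + 1 - m ≤ r ∧ r < t} = Ico (max m (r + 1)) (min s (r + m)) := by
    ext t
    simp only [mem_filter, mem_Ico]
    omega
  rw [filter_const, hwindow, Nat.card_Ico]
  obtain hμ | hμ : min (r + 1) (s - 1 - r) = 1 ∨ 2 ≤ min (r + 1) (s - 1 - r) := by omega
  · rw [hμ, mul_one]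
    split_ifs <;> simp only [card_range, card_empty] <;> omega
  · have := Nat.mul_le_mul_left (m - 1) hμ
    split_ifs <;> simp only [card_range, card_empty] <;> omega

theorem sum_abs_sub_add_sum_window_le (hv : Monotone v) {m s : ℕ} (hm : 2 ≤ m) (hms : m ≤ s)
    {c : ℝ} (hc : c ∈ Set.Icc (v 0) (v (m - 1))) (y : ℝ) :
    ∑ t ∈ range m, |v t - c| + ∑ t ∈ Ico m s, (v t - v (t + 1 - m)) ≤
      ((m : ℝ) - 1) * ∑ t ∈ range s, |v t - y| := by
  have hshared : ∑ t ∈ range m, |v t - c| ≤ ∑ _t ∈ range (m - 1), (v (m - 1) - v 0) := by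
    rw [sum_const, card_range, nsmul_eq_mul, Nat.cast_pred (by omega)]
    exact sum_abs_sub_le_mul_sub_of_mem_Icc hv hm hc
  rw [sum_sub_eq_sum_card_mul_step (range (m - 1)) (fun _ => 0) (fun _ => m - 1) (N := s - 1)
    (fun _ _ => by omega)] at hshared
  rw [sum_sub_eq_sum_card_mul_step (Ico m s) (fun t => t + 1 - m) (fun t => t) (N := s - 1)
    (fun t ht => by simp only [mem_Ico] at ht; omega)]
  calc _ ≤ ∑ r ∈ range (s - 1), ((#{_t ∈ range (m - 1) | 0 ≤ r ∧ r < m - 1} +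
          #{t ∈ Ico m s | t + 1 - m ≤ r ∧ r < t} : ℕ) : ℝ) * (v (r + 1) - v r) := by
        push_cast
        simp only [add_mul, sum_add_distrib]
        linarith
    _ ≤ ∑ r ∈ range (s - 1),
          (((m - 1) * min (r + 1) (s - 1 - r) : ℕ) : ℝ) * (v (r + 1) - v r) := by
        gcongr with r hr
        · exact sub_nonneg.2 (hv r.le_succ)
        · exact card_shared_add_card_window_le hm (mem_range.1 hr)
    _ = ((m : ℝ) - 1) *
          ∑ r ∈ range (s - 1), (min (r + 1) (s - 1 - r) : ℕ) * (v (r + 1) - v r) := by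
        rw [mul_sum]
        push_cast [Nat.cast_pred (show 0 < m by omega)]
        simp only [mul_assoc]
    _ ≤ ((m : ℝ) - 1) * ∑ t ∈ range s, |v t - y| := by
        gcongr
        · linarith [(show (2 : ℝ) ≤ m by exact_mod_cast hm)]
        · exact sum_min_mul_step_le_sum_abs_sub s y

end Steps

theorem clusterCost_le_abs_sub {k : ℕ} (Y : Fin k → ℝ) (p : ℝ) (j : Fin k) :
    clusterCost Y p ≤ |p - Y j| :=
  csInf_le ⟨0, by rintro _ ⟨i, rfl⟩; exact dist_nonneg⟩ ⟨j, rfl⟩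

theorem sum_clusterCost_le {v : ℕ → ℝ} (hv : Monotone v) {m s k : ℕ} (hm : 2 ≤ m) (hms : m ≤ s)
    {Y : Fin k → ℝ} (hY : ∀ a b, b < s → m ≤ b + 1 - a → ∃ j, Y j ∈ Set.Icc (v a) (v b)) (y : ℝ) :
    ∑ t ∈ range s, clusterCost Y (v t) ≤ ((m : ℝ) - 1) * ∑ t ∈ range s, |v t - y| := by
  obtain ⟨j₀, hj₀⟩ := hY 0 (m - 1) (by omega) (by omega)
  have hwindow : ∀ t ∈ Ico m s, clusterCost Y (v t) ≤ v t - v (t + 1 - m) := by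
    intro t ht
    rw [mem_Ico] at ht
    obtain ⟨j, hj⟩ := hY (t + 1 - m) t ht.2 (by omega)
    calc clusterCost Y (v t) ≤ |v t - Y j| := clusterCost_le_abs_sub Y (v t) j
      _ = v t - Y j := abs_of_nonneg (sub_nonneg.2 hj.2)
      _ ≤ v t - v (t + 1 - m) := by linarith [hj.1]
  rw [← sum_range_add_sum_Ico _ hms]
  calc _ ≤ ∑ t ∈ range m, |v t - Y j₀| + ∑ t ∈ Ico m s, (v t - v (t + 1 - m)) :=
        add_le_add (sum_le_sum fun t _ => clusterCost_le_abs_sub Y (v t) j₀) (sum_le_sum hwindow)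
    _ ≤ _ := sum_abs_sub_add_sum_window_le hv hm hms hj₀ y

theorem exists_monotone_sum_comp_eq {ι : Type*} (S : Finset ι) (hS : S.Nonempty) (f : ι → ℝ) :
    ∃ v : ℕ → ℝ, Monotone v ∧
      ∀ {M : Type} [AddCommMonoid M] (F : ℝ → M), ∑ i ∈ S, F (f i) = ∑ t ∈ range #S, F (v t) := by
  have hs : 0 < #S := hS.card_pos
  let g : Fin #S → ℝ := fun t => f (S.equivFin.symm t)
  let clamp : ℕ → Fin #S := fun t => ⟨min t (#S - 1), by omega⟩
  have hclamp : Monotone clamp := fun a b hab => Fin.mk_le_mk.2 (min_le_min_right _ hab)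
  refine ⟨(g ∘ Tuple.sort g) ∘ clamp, (Tuple.monotone_sort g).comp hclamp, fun F => ?_⟩
  calc ∑ i ∈ S, F (f i) = ∑ i : S, F (f i) := (sum_coe_sort S _).symm
    _ = ∑ t, F (g t) := (S.equivFin.symm.sum_comp _).symm
    _ = ∑ t, F (g (Tuple.sort g t)) := (Equiv.sum_comp (Tuple.sort g) _).symm
    _ = ∑ t : Fin #S, F (g (Tuple.sort g (clamp t))) := by
      refine sum_congr rfl fun t _ => ?_
      rw [show clamp t = t from Fin.ext (by simp only [clamp]; omega)]
    _ = _ := Fin.sum_univ_eq_sum_range (fun t => F (g (Tuple.sort g (clamp t)))) #S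

theorem exists_mul_mem_of_ordConnected {T : Finset ℕ} (hT : (T : Set ℕ).OrdConnected) {m : ℕ}
    (hm : 0 < m) (hcard : m ≤ #T) : ∃ j, j * m ∈ T := by
  have hne : T.Nonempty := card_pos.1 (by omega)
  have hspan : #T ≤ T.max' hne + 1 - T.min' hne := by
    rw [← Nat.card_Icc]
    exact card_le_card fun t ht => mem_Icc.2 ⟨T.min'_le t ht, T.le_max' t ht⟩
  -- the first multiple of `m` not below `min' T`
  refine ⟨(T.min' hne + m - 1) / m, hT.out (T.min'_mem hne) (T.max'_mem hne) ⟨?_, ?_⟩⟩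
  · have := Nat.lt_div_mul_add (a := T.min' hne + m - 1) hm
    omega
  · have := Nat.div_mul_le_self (T.min' hne + m - 1) m
    omega

theorem exists_center_mem_Icc {u : ℕ → ℝ} (hu : Monotone u) {n k m : ℕ} (hm : 0 < m)
    (hn : n ≤ k * m) {a b : ℝ} (hcard : m ≤ #{t ∈ range n | u t ∈ Set.Icc a b}) :
    ∃ j : Fin k, u (j * m) ∈ Set.Icc a b := by
  have hconn : ((({t ∈ range n | u t ∈ Set.Icc a b}) : Finset ℕ) : Set ℕ).OrdConnected := by
    refine ⟨fun t₁ ht₁ t₂ ht₂ t ht => ?_⟩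
    simp only [coe_filter, mem_range, Set.mem_ofPred_eq] at ht₁ ht₂ ⊢
    exact ⟨lt_of_le_of_lt ht.2 ht₂.1, ht₁.2.1.trans (hu ht.1), (hu ht.2).trans ht₂.2.2⟩
  obtain ⟨j, hj⟩ := exists_mul_mem_of_ordConnected hconn hm hcard
  rw [mem_filter, mem_range] at hj
  have hjk : j < k := Nat.lt_of_mul_lt_mul_right (hj.1.trans_le hn)
  exact ⟨⟨j, hjk⟩, hj.2⟩

theorem card_Icc_le_card_filter_mem_Icc {v : ℕ → ℝ} (hv : Monotone v) {a b s : ℕ} (hb : b < s) :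
    b + 1 - a ≤ #{t ∈ range s | v t ∈ Set.Icc (v a) (v b)} := by
  rw [← Nat.card_Icc]
  exact card_le_card fun t ht => by
    rw [mem_Icc] at ht
    exact mem_filter.2 ⟨mem_range.2 (by omega), hv ht.1, hv ht.2⟩

theorem card_filter_comp_eq {ι : Type*} {S : Finset ι} {f : ι → ℝ} {v : ℕ → ℝ}
    (h : ∀ F : ℝ → ℕ, ∑ i ∈ S, F (f i) = ∑ t ∈ range #S, F (v t)) (P : ℝ → Prop)
    [DecidablePred P] : #{i ∈ S | P (f i)} = #{t ∈ range #S | P (v t)} := by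
  simp only [card_filter]
  exact h fun y => if P y then 1 else 0

theorem two_le_natCeil_div {n k : ℕ} (hk : 0 < k) (hnk : k < n) : 2 ≤ ⌈(n : ℝ) / k⌉₊ :=
  Nat.lt_ceil.2 <| by
    rw [Nat.cast_one, one_lt_div (by exact_mod_cast hk)]
    exact_mod_cast hnk

theorem le_mul_natCeil_div (n : ℕ) {k : ℕ} (hk : 0 < k) : n ≤ k * ⌈(n : ℝ) / k⌉₊ := by
  have := (div_le_iff₀ (by exact_mod_cast hk : (0 : ℝ) < k)).1 (Nat.le_ceil ((n : ℝ) / k))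
  rw [mul_comm] at this
  exact_mod_cast this

theorem stmt4 {n k : ℕ} (hk : 0 < k) (hnk : k < n) (x : Fin n → ℝ) :
    ∃ Y : Fin k → ℝ,
      ∀ S : Finset (Fin n), (n : ℝ) / (k : ℝ) ≤ S.card →
        ∀ y' : ℝ,
          ∑ i ∈ S, clusterCost Y (x i) ≤
            ((⌈(n : ℝ) / (k : ℝ)⌉₊ : ℝ) - 1) * ∑ i ∈ S, |x i - y'| := by
  set m := ⌈(n : ℝ) / (k : ℝ)⌉₊
  have hm : 2 ≤ m := two_le_natCeil_div hk hnk
  have hn : n ≤ k * m := le_mul_natCeil_div n hk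
  obtain ⟨u, hu, hxu⟩ := exists_monotone_sum_comp_eq univ ⟨⟨0, by omega⟩, mem_univ _⟩ x
  refine ⟨fun j => u (j * m), fun S hS y => ?_⟩
  have hms : m ≤ #S := Nat.ceil_le.2 hS
  obtain ⟨v, hv, hxv⟩ := exists_monotone_sum_comp_eq S (card_pos.1 (by omega)) x
  rw [hxv (clusterCost _), hxv (fun p => |p - y|)]
  refine sum_clusterCost_le hv hm hms
    (fun a b hb hab => exists_center_mem_Icc hu (by omega) hn ?_) y
  calc m ≤ #{t ∈ range #S | v t ∈ Set.Icc (v a) (v b)} :=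
        hab.trans (card_Icc_le_card_filter_mem_Icc hv hb)
    _ = #{i ∈ S | x i ∈ Set.Icc (v a) (v b)} :=
        (card_filter_comp_eq (fun F => hxv F) (· ∈ Set.Icc (v a) (v b))).symm
    _ ≤ #{i ∈ univ | x i ∈ Set.Icc (v a) (v b)} :=
        card_le_card (filter_subset_filter _ (subset_univ S))
    _ = #{t ∈ range n | u t ∈ Set.Icc (v a) (v b)} := by
        rw [card_filter_comp_eq (fun F => hxu F) (· ∈ Set.Icc (v a) (v b)), card_univ,
          Fintype.card_fin]
end

section
/- Let G be a finite connected acyclic simple graph (a tree) on vertex set V, with graph distance d(u,v) equal to the number of edges on the shortest u–v path (viewed as a real number). Let x : Fin n → V be agents at vertices with n > k ≥ 1, and let M = V. Then there exists a k-clustering Y : Fin k → V that is a (1, ⌈n/k⌉ − 1)-core clustering; that is, for every set S ⊆ Fin n with |S| ≥ n/k and every vertex y' ∈ V, one has (⌈n/k⌉ − 1)·Σ_{i∈S} d(x_i, y') ≥ Σ_{i∈S} min_{j<k} d(x_i, Y_j). -/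
/-- The cost of an agent located at vertex `p` under the `k`-clustering `Y` in a graph `G`:
the minimum graph distance from `p` to a center of `Y`, as a real number. -/
noncomputable def treeClusterCost {V : Type*} (G : SimpleGraph V) {k : ℕ}
    (Y : Fin k → V) (p : V) : ℝ :=
  sInf (Set.range fun j => (G.dist p (Y j) : ℝ))

/-!
Let `m = ⌈n/k⌉ ≥ 2`. Call an edge `vp` heavy if at least `m` agents lie on `v`'s side of it.
Choose a heavy edge whose side is inclusion-minimal, open a center at `v`, discard the agents
on that side and recurse; if no edge is heavy, one center anywhere suffices. Each center
discards at least `m` agents, so at most `n / m ≤ k` centers are opened.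

Let a coalition `S` of at least `m` agents deviate to `y`. If `y` is on `v`'s side,
minimality makes every branch at `v` towards `y` light, so at least `|S| - m + 1` members
pay exactly `d(v, y)` more to reach `y` than to reach `v`, while every member pays at most
`d(v, y)` less; this makes serving all of `S` at `v` at most `m - 1` times as expensive. If
`y` is beyond `p`, the members on `v`'s side are served at `v` no worse than at `y`, and the
others by the recursive centers, unless fewer than `m` of them remain, in which case
everyone is again served at `v`.
-/

open Finset

/- Each member of `P` saves `ρ` and every other member loses at most `ρ`; the net loss is at most
`(m - 2) ρ`, and `ρ ≤ ∑ b` because `ρ ≤ b i` on the nonempty `P`. -/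
lemma sum_le_sub_one_mul_sum {ι : Type*} {S P : Finset ι} {a b : ι → ℝ} {ρ : ℝ} {m : ℕ}
    (hm : 2 ≤ m) (hPS : P ⊆ S) (hP : P.Nonempty) (hcard : #S + 2 ≤ 2 * #P + m)
    (ha : ∀ i, 0 ≤ a i) (hb : ∀ i, 0 ≤ b i) (hρ : 0 ≤ ρ)
    (hfar : ∀ i ∈ S, a i ≤ b i + ρ) (hnear : ∀ i ∈ P, a i + ρ ≤ b i) :
    ∑ i ∈ S, a i ≤ (m - 1) * ∑ i ∈ S, b i := by
  classical
  obtain ⟨i₀, hi₀⟩ := hP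
  have hρS : ρ ≤ ∑ i ∈ S, b i :=
    (show ρ ≤ b i₀ by linarith [hnear i₀ hi₀, ha i₀]).trans
      (single_le_sum (fun i _ => hb i) (hPS hi₀))
  have hout : ∑ i ∈ S \ P, a i ≤ ∑ i ∈ S \ P, b i + #(S \ P) * ρ := by
    simpa [sum_add_distrib] using sum_le_sum fun i hi => hfar i (sdiff_subset hi)
  have hin : ∑ i ∈ P, a i + #P * ρ ≤ ∑ i ∈ P, b i := by
    simpa [sum_add_distrib] using sum_le_sum hnear
  have hcard' : (#(S \ P) : ℝ) + 2 ≤ #P + m := by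
    have := card_sdiff_add_card_eq_card hPS
    exact_mod_cast (by omega : #(S \ P) + 2 ≤ #P + m)
  have hm' : (2 : ℝ) ≤ m := by exact_mod_cast hm
  rw [← sum_sdiff hPS] at hρS ⊢
  rw [← sum_sdiff hPS]
  nlinarith

namespace SimpleGraph

variable {V : Type*} {G : SimpleGraph V}

/-- For an edge `vp` of a tree, `G.side v p` is the vertex set of the component of `v` in the
tree with the edge `vp` removed. -/
def side (G : SimpleGraph V) (v p : V) : Set V := {u | G.dist u v < G.dist u p}

noncomputable instance (u v p : V) : Decidable (u ∈ G.side v p) :=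
  inferInstanceAs (Decidable (G.dist u v < G.dist u p))

lemma IsAcyclic.length_eq_dist_of_isPath (hG : G.IsAcyclic) {u v : V} {p : G.Walk u v}
    (hp : p.IsPath) : p.length = G.dist u v := by
  obtain ⟨q, hq, hqd⟩ := p.reachable.exists_path_of_dist
  rw [← hqd, show p = q from
    congrArg Subtype.val ((hG.subsingleton_path u v).elim ⟨p, hp⟩ ⟨q, hq⟩)]

lemma Walk.dist_add_dist_of_mem_support {u v w : V} (p : G.Walk u v)
    (hp : p.length = G.dist u v) (hw : w ∈ p.support) :
    G.dist u w + G.dist w v = G.dist u v := by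
  classical
  have htake := dist_le (p.takeUntil w hw)
  have hdrop := dist_le (p.dropUntil w hw)
  have hlen : (p.takeUntil w hw).length + (p.dropUntil w hw).length = p.length := by
    rw [← Walk.length_append, Walk.take_spec]
  have htri := (p.takeUntil w hw).reachable.dist_triangle_left v
  omega

lemma Connected.mem_side_of_mem_support (hG : G.Connected) {a v q z : V} (p : G.Walk a v)
    (hp : p.length = G.dist a v) (ha : a ∈ G.side v q) (hz : z ∈ p.support) :
    z ∈ G.side v q := by
  have hsplit := p.dist_add_dist_of_mem_support hp hz
  have htri : G.dist a q ≤ G.dist a z + G.dist z q := hG.dist_triangle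
  simp only [side, Set.mem_ofPred_eq] at ha ⊢
  omega

lemma mem_side_self {v p : V} (h : G.Adj v p) : v ∈ G.side v p := by
  simp [side, dist_eq_one_iff_adj.mpr h]

lemma IsTree.mem_side_or_mem_side (hG : G.IsTree) {v p : V} (h : G.Adj v p) (u : V) :
    u ∈ G.side v p ∨ u ∈ G.side p v := by
  simp only [side, Set.mem_ofPred_eq]
  have := hG.dist_eq_dist_add_one_of_adj u h
  omega

/- The geodesics `a → v` and `p → b` stay on the two sides of `vp`, so joining them through `vp`
gives a path, which in a tree is a geodesic. -/
lemma IsTree.dist_eq_of_mem_side (hG : G.IsTree) {v p a b : V} (h : G.Adj v p)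
    (ha : a ∈ G.side v p) (hb : b ∈ G.side p v) :
    G.dist a b = G.dist a v + G.dist v b := by
  obtain ⟨q, hqp, hq⟩ := hG.connected.exists_path_of_dist a v
  obtain ⟨r, hrp, hr⟩ := hG.connected.exists_path_of_dist p b
  have hside_q : ∀ z ∈ q.support, z ∈ G.side v p :=
    fun z hz => hG.connected.mem_side_of_mem_support q hq ha hz
  have hside_r : ∀ z ∈ r.reverse.support, z ∈ G.side p v :=
    fun z hz => hG.connected.mem_side_of_mem_support r.reverse
      (by simpa [dist_comm] using hr) hb hz
  have hpath : (q.append (Walk.cons h r)).IsPath := by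
    rw [Walk.isPath_def, Walk.support_append, Walk.support_cons, List.tail_cons,
      List.nodup_append]
    refine ⟨hqp.support_nodup, hrp.support_nodup, fun z hzq z' hzr hzz => ?_⟩
    have hzv := hside_q z hzq
    have hzp := hside_r z' (by simpa using hzr)
    subst hzz
    simp only [side, Set.mem_ofPred_eq] at hzv hzp
    omega
  have hlen := hG.isAcyclic.length_eq_dist_of_isPath hpath
  simp only [Walk.length_append, Walk.length_cons, hq, hr] at hlen
  have htri_avb := hG.connected.dist_triangle (u := a) (v := v) (w := b)
  have htri_vpb := hG.connected.dist_triangle (u := v) (v := p) (w := b)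
  have hvp := dist_eq_one_iff_adj.mpr h
  omega

lemma IsTree.side_ssubset_side (hG : G.IsTree) {v p c : V} (hvp : G.Adj v p) (hvc : G.Adj v c)
    (hcp : c ≠ p) : G.side c v ⊂ G.side v p := by
  have hc : c ∈ G.side v p := by
    have hcases := hG.dist_eq_dist_add_one_of_adj c hvp
    have hcv := dist_eq_one_iff_adj.mpr hvc.symm
    have hcp' := hG.connected.dist_eq_zero_iff.not.mpr hcp
    simp only [side, Set.mem_ofPred_eq]
    omega
  refine ⟨fun u hu => ?_, fun hsub => ?_⟩
  · by_contra hu'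
    have hup : u ∈ G.side p v := (hG.mem_side_or_mem_side hvp u).resolve_left hu'
    have hcu := hG.dist_eq_of_mem_side hvp hc hup
    have hcv := dist_eq_one_iff_adj.mpr hvc.symm
    simp only [side, Set.mem_ofPred_eq] at hu
    rw [dist_comm (u := c) (v := u), dist_comm (u := v) (v := u)] at hcu
    omega
  · have := hsub (mem_side_self hvp)
    simp [side, dist_eq_one_iff_adj.mpr hvc] at this

lemma Connected.exists_adj_mem_side (hG : G.Connected) {v y : V} (hne : y ≠ v) :
    ∃ c, G.Adj v c ∧ y ∈ G.side c v := by
  obtain ⟨q, -, hq⟩ := hG.exists_path_of_dist v y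
  cases q with
  | nil => exact absurd rfl hne
  | cons hadj r =>
    refine ⟨_, hadj, ?_⟩
    have hr := dist_le r
    simp only [Walk.length_cons] at hq
    simp only [side, Set.mem_ofPred_eq, dist_comm (u := y)]
    omega

variable {ι : Type*}

lemma Connected.sum_dist_le_of_between (hG : G.Connected) {x : ι → V} {m : ℕ} (hm : 2 ≤ m)
    {S P : Finset ι} (hS : m ≤ #S) (hPS : P ⊆ S) (hcard : #S + 2 ≤ 2 * #P + m) {v y : V}
    (hP : ∀ i ∈ P, G.dist (x i) v + G.dist v y = G.dist (x i) y) :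
    ∑ i ∈ S, (G.dist (x i) v : ℝ) ≤ (m - 1) * ∑ i ∈ S, (G.dist (x i) y : ℝ) := by
  refine sum_le_sub_one_mul_sum hm hPS (card_pos.mp (by omega)) hcard (fun _ => Nat.cast_nonneg _)
    (fun _ => Nat.cast_nonneg _) (Nat.cast_nonneg (G.dist v y)) (fun i _ => ?_)
    (fun i hi => by exact_mod_cast (hP i hi).le)
  have htri := hG.dist_triangle (u := x i) (v := y) (w := v)
  rw [dist_comm (u := y)] at htri
  exact_mod_cast htri

lemma IsTree.sum_dist_le_of_light (hG : G.IsTree) {x : ι → V} {m : ℕ} (hm : 2 ≤ m)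
    {S : Finset ι} (hS : m ≤ #S) {v y : V}
    (hlight : ∀ c, G.Adj v c → y ∈ G.side c v → #{i ∈ S | x i ∈ G.side c v} < m) :
    ∑ i ∈ S, (G.dist (x i) v : ℝ) ≤ (m - 1) * ∑ i ∈ S, (G.dist (x i) y : ℝ) := by
  classical
  obtain ⟨P, hPS, hcard, hP⟩ : ∃ P ⊆ S, #S + 2 ≤ 2 * #P + m ∧
      ∀ i ∈ P, G.dist (x i) v + G.dist v y = G.dist (x i) y := by
    rcases eq_or_ne y v with rfl | hne
    · exact ⟨S, subset_rfl, by omega, by simp⟩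
    obtain ⟨c, hvc, hy⟩ := hG.connected.exists_adj_mem_side hne
    have hB := hlight c hvc hy
    refine ⟨S \ {i ∈ S | x i ∈ G.side c v}, sdiff_subset, ?_, fun i hi => ?_⟩
    · have hsplit := card_sdiff_add_card_eq_card (filter_subset (fun i => x i ∈ G.side c v) S)
      omega
    · obtain ⟨hiS, hiB⟩ := mem_sdiff.mp hi
      have hxi : x i ∈ G.side v c := (hG.mem_side_or_mem_side hvc (x i)).resolve_right
        fun h => hiB (mem_filter.mpr ⟨hiS, h⟩)
      exact (hG.dist_eq_of_mem_side hvc hxi hy).symm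
  exact hG.connected.sum_dist_le_of_between hm hS hPS hcard hP

/-- `C` is a `(1, m - 1)`-core set of centers for the agents in `W`; the assignment `σ` of the
coalition to centers of `C` stands in for the nearest-center cost, which it bounds from above. -/
def CoreStable (G : SimpleGraph V) (x : ι → V) (m : ℕ) (W : Finset ι) (C : Finset V) : Prop :=
  ∀ S ⊆ W, m ≤ #S → ∀ y : V, ∃ σ : ι → V, (∀ i ∈ S, σ i ∈ C) ∧
    ∑ i ∈ S, (G.dist (x i) (σ i) : ℝ) ≤ (m - 1) * ∑ i ∈ S, (G.dist (x i) y : ℝ)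

lemma coreStable_empty_of_card_lt {x : ι → V} {m : ℕ} {W : Finset ι} (hW : #W < m) :
    G.CoreStable x m W ∅ :=
  fun S hSW hS => absurd (hS.trans (card_le_card hSW)) (by omega)

lemma IsTree.coreStable_insert [DecidableEq V] {x : ι → V} {m : ℕ} {W : Finset ι}
    {C : Finset V} {v p : V} (hG : G.IsTree) (hm : 2 ≤ m) (hvp : G.Adj v p)
    (hlight : ∀ c, G.Adj v c → c ≠ p → #{i ∈ W | x i ∈ G.side c v} < m)
    (hC : G.CoreStable x m {i ∈ W | x i ∉ G.side v p} C) :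
    G.CoreStable x m W (insert v C) := by
  intro S hSW hS y
  by_cases hy : y ∈ G.side v p
  · refine ⟨fun _ => v, fun _ _ => mem_insert_self v C, ?_⟩
    refine hG.sum_dist_le_of_light hm hS fun c hvc hyc => ?_
    have hcp : c ≠ p := by
      rintro rfl
      simp only [side, Set.mem_ofPred_eq] at hy hyc
      omega
    exact (card_le_card (filter_subset_filter _ hSW)).trans_lt (hlight c hvc hcp)
  have hy' : y ∈ G.side p v := (hG.mem_side_or_mem_side hvp y).resolve_left hy
  set S₁ := {i ∈ S | x i ∈ G.side v p}
  set S₂ := {i ∈ S | x i ∉ G.side v p}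
  have hS₁ : ∀ i ∈ S₁, G.dist (x i) v + G.dist v y = G.dist (x i) y :=
    fun i hi => (hG.dist_eq_of_mem_side hvp (mem_filter.mp hi).2 hy').symm
  by_cases hS₂ : m ≤ #S₂
  · obtain ⟨σ, hσC, hσ⟩ := hC S₂ (filter_subset_filter _ hSW) hS₂ y
    refine ⟨fun i => if x i ∈ G.side v p then v else σ i, fun i hi => ?_, ?_⟩
    · dsimp only
      split_ifs with h
      · exact mem_insert_self v C
      · exact mem_insert_of_mem (hσC i (mem_filter.mpr ⟨hi, h⟩))
    have hm' : (2 : ℝ) ≤ m := by exact_mod_cast hm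
    have h₁ :
        ∑ i ∈ S₁, (G.dist (x i) v : ℝ) ≤ (m - 1) * ∑ i ∈ S₁, (G.dist (x i) y : ℝ) :=
      (sum_le_sum fun i hi => by exact_mod_cast Nat.le.intro (hS₁ i hi)).trans
        (le_mul_of_one_le_left (sum_nonneg fun _ _ => Nat.cast_nonneg _) (by linarith))
    rw [← sum_filter_add_sum_filter_not S (fun i => x i ∈ G.side v p),
      ← sum_filter_add_sum_filter_not S (fun i => x i ∈ G.side v p)
        (fun i => (G.dist (x i) y : ℝ)), mul_add]
    refine add_le_add ((sum_congr rfl fun i hi => ?_).trans_le h₁)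
      ((sum_congr rfl fun i hi => ?_).trans_le hσ)
    · simp only [if_pos (mem_filter.mp hi).2]
    · simp only [if_neg (mem_filter.mp hi).2]
  · refine ⟨fun _ => v, fun _ _ => mem_insert_self v C, ?_⟩
    have hsplit : #S₁ + #S₂ = #S := card_filter_add_card_filter_not _
    exact hG.connected.sum_dist_le_of_between hm hS (P := S₁) (filter_subset _ S) (by omega)
      hS₁

lemma IsTree.exists_minimal_heavy_side [Finite V] (hG : G.IsTree) {x : ι → V} {m : ℕ}
    {W : Finset ι} (h : ∃ v p, G.Adj v p ∧ m ≤ #{i ∈ W | x i ∈ G.side v p}) :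
    ∃ v p, G.Adj v p ∧ m ≤ #{i ∈ W | x i ∈ G.side v p} ∧
      ∀ c, G.Adj v c → c ≠ p → #{i ∈ W | x i ∈ G.side c v} < m := by
  obtain ⟨⟨v, p⟩, ⟨hvp, hheavy⟩, hmin⟩ := Set.exists_min_image
    {e : V × V | G.Adj e.1 e.2 ∧ m ≤ #{i ∈ W | x i ∈ G.side e.1 e.2}}
    (fun e => (G.side e.1 e.2).ncard) (Set.toFinite _) (let ⟨v, p, h⟩ := h; ⟨(v, p), h⟩)
  refine ⟨v, p, hvp, hheavy, fun c hvc hcp => ?_⟩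
  by_contra! hc
  exact (Set.ncard_lt_ncard (hG.side_ssubset_side hvp hvc hcp)).not_ge
    (hmin (c, v) ⟨hvc.symm, hc⟩)

lemma IsTree.exists_coreStable [Finite V] (hG : G.IsTree) (x : ι → V) {m : ℕ} (hm : 2 ≤ m)
    (W : Finset ι) : ∃ C : Finset V, m * #C ≤ #W ∧ G.CoreStable x m W C := by
  classical
  induction W using Finset.strongInduction with | H W ih =>
  by_cases hW : #W < m
  · exact ⟨∅, by simp, coreStable_empty_of_card_lt hW⟩
  by_cases hheavy : ∃ v p, G.Adj v p ∧ m ≤ #{i ∈ W | x i ∈ G.side v p}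
  · obtain ⟨v, p, hvp, hheavy, hlight⟩ := hG.exists_minimal_heavy_side hheavy
    obtain ⟨i, hi⟩ := card_pos.mp (by omega : 0 < #{i ∈ W | x i ∈ G.side v p})
    obtain ⟨C, hC_card, hC⟩ := ih {i ∈ W | x i ∉ G.side v p}
      (filter_ssubset.mpr ⟨i, (mem_filter.mp hi).1, not_not.mpr (mem_filter.mp hi).2⟩)
    have hsplit : #{i ∈ W | x i ∈ G.side v p} + #{i ∈ W | x i ∉ G.side v p} = #W :=
      card_filter_add_card_filter_not _
    refine ⟨insert v C, ?_, hG.coreStable_insert hm hvp hlight hC⟩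
    calc m * #(insert v C) ≤ m * #C + m := by
          simpa [mul_add] using Nat.mul_le_mul_left m (card_insert_le v C)
      _ ≤ #W := by omega
  · push Not at hheavy
    obtain ⟨v⟩ := hG.connected.nonempty
    refine ⟨{v}, by simpa using not_lt.mp hW, fun S hSW hS y =>
      ⟨fun _ => v, fun _ _ => mem_singleton_self v, ?_⟩⟩
    exact hG.sum_dist_le_of_light hm hS fun c hvc _ =>
      (card_le_card (filter_subset_filter _ hSW)).trans_lt (hheavy c v hvc.symm)

end SimpleGraph

lemma treeClusterCost_le {V : Type*} (G : SimpleGraph V) {k : ℕ} (Y : Fin k → V) (p : V)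
    (j : Fin k) : treeClusterCost G Y p ≤ G.dist p (Y j) :=
  csInf_le ⟨0, by rintro _ ⟨j, rfl⟩; positivity⟩ ⟨j, rfl⟩

lemma Finset.exists_subset_range_fin {α : Type*} [Nonempty α] {k : ℕ} (C : Finset α)
    (hC : #C ≤ k) : ∃ Y : Fin k → α, ↑C ⊆ Set.range Y := by
  obtain ⟨a⟩ := ‹Nonempty α›
  refine ⟨fun j => if h : (j : ℕ) < #C then C.equivFin.symm ⟨j, h⟩ else a, fun c hc => ?_⟩
  exact ⟨Fin.castLE hC (C.equivFin ⟨c, hc⟩), by simp⟩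

theorem stmt6 {V : Type*} [Fintype V] (G : SimpleGraph V)
    (hGconn : G.Connected) (hGacyc : G.IsAcyclic)
    {n k : ℕ} (hk : 0 < k) (hnk : k < n) (x : Fin n → V) :
    ∃ Y : Fin k → V,
      ∀ S : Finset (Fin n), (n : ℝ) / (k : ℝ) ≤ S.card →
        ∀ y' : V,
          ∑ i ∈ S, treeClusterCost G Y (x i) ≤
            ((⌈(n : ℝ) / (k : ℝ)⌉₊ : ℝ) - 1) * ∑ i ∈ S, (G.dist (x i) y' : ℝ) := by
  have hk' : (0 : ℝ) < k := by exact_mod_cast hk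
  have hm : 2 ≤ ⌈(n : ℝ) / k⌉₊ :=
    Nat.lt_ceil.mpr (by simpa using (one_lt_div hk').mpr (by exact_mod_cast hnk))
  have hnm : n ≤ ⌈(n : ℝ) / k⌉₊ * k := by
    exact_mod_cast (div_le_iff₀ hk').mp (Nat.le_ceil ((n : ℝ) / k))
  obtain ⟨C, hC_card, hC⟩ := (⟨hGconn, hGacyc⟩ : G.IsTree).exists_coreStable x hm univ
  rw [card_univ, Fintype.card_fin] at hC_card
  have : Nonempty V := hGconn.nonempty
  obtain ⟨Y, hY⟩ := C.exists_subset_range_fin (k := k)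
    (Nat.le_of_mul_le_mul_left (hC_card.trans hnm) (by omega))
  refine ⟨Y, fun S hS y => ?_⟩
  obtain ⟨σ, hσC, hσ⟩ := hC S (subset_univ S) (Nat.ceil_le.mpr hS) y
  refine le_trans (sum_le_sum fun i hi => ?_) hσ
  obtain ⟨j, hj⟩ := hY (hσC i hi)
  exact hj ▸ treeClusterCost_le G Y (x i) j
end

section
/- Let k ≥ 2, let G be the path graph on the k+1 vertices {0, 1, …, k} (with edges between consecutive integers, all of unit length), and let the agents x : Fin n → V place exactly k agents at each vertex, so n = k(k+1); take M = V, with d the graph distance. Then for every k-clustering Y : Fin k → V there exist a set S ⊆ Fin n with |S| ≥ n/k (= k+1) and a vertex y' ∈ V such that Σ_{i∈S} d(x_i, y') > 0 and Σ_{i∈S} min_{j<k} d(x_i, Y_j) ≥ k·Σ_{i∈S} d(x_i, y'). In particular, for every real β with 1 ≤ β < k, no k-clustering of this tree instance is a (1, β)-core clustering. -/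
/-!
A `k`-clustering of the `k + 1` vertices of the path leaves some vertex `v` without a center.
The `k` agents at `v` together with one agent at a neighbour of `v` form a coalition of size
`k + 1 = n / k`: moving to `v` costs the coalition `1` in total, while the `k` agents at `v` alone
already pay at least `1` each under `Y`.
-/

open Finset

namespace SimpleGraph

variable {V : Type*} (G : SimpleGraph V) {k : ℕ}

lemma treeClusterCost_nonneg (Y : Fin k → V) (p : V) : 0 ≤ treeClusterCost G Y p :=
  Real.sInf_nonneg <| by
    rintro r ⟨j, rfl⟩
    positivity

variable {G}

lemma one_le_treeClusterCost (hG : G.Connected) (hk : 0 < k) {Y : Fin k → V} {p : V}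
    (hp : ∀ j, Y j ≠ p) : 1 ≤ treeClusterCost G Y p := by
  refine le_csInf ⟨_, ⟨⟨0, hk⟩, rfl⟩⟩ ?_
  rintro r ⟨j, rfl⟩
  exact Nat.one_le_cast.mpr (hG.pos_dist_of_ne (hp j).symm)

variable {ι : Type*} [Fintype ι] [DecidableEq ι] [DecidableEq V]

lemma sum_dist_insert_of_adj (x : ι → V) {v : V} {i₀ : ι} (hadj : G.Adj (x i₀) v) :
    ∑ i ∈ insert i₀ ({i | x i = v} : Finset ι), (G.dist (x i) v : ℝ) = 1 := by
  have hi₀ : i₀ ∉ ({i | x i = v} : Finset ι) := by simpa using hadj.ne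
  rw [sum_insert hi₀, dist_eq_one_iff_adj.mpr hadj, sum_eq_zero]
  · norm_num
  · intro i hi
    simp [(mem_filter.mp hi).2]

lemma card_le_sum_treeClusterCost (hG : G.Connected) (hk : 0 < k) {Y : Fin k → V}
    (x : ι → V) {v : V} (hv : ∀ j, Y j ≠ v) (i₀ : ι) :
    (#{i | x i = v} : ℝ) ≤ ∑ i ∈ insert i₀ ({i | x i = v} : Finset ι), treeClusterCost G Y (x i) :=
  calc (#{i | x i = v} : ℝ) = ∑ i ∈ {i | x i = v}, (1 : ℝ) := by simp
    _ ≤ ∑ i ∈ {i | x i = v}, treeClusterCost G Y (x i) :=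
        sum_le_sum fun i hi => (mem_filter.mp hi).2 ▸ one_le_treeClusterCost hG hk hv
    _ ≤ _ := sum_le_sum_of_subset_of_nonneg (subset_insert _ _)
        fun _ _ _ => treeClusterCost_nonneg G Y _

end SimpleGraph

open SimpleGraph

theorem stmt8 {k n : ℕ} (hk : 2 ≤ k) (hn : n = k * (k + 1))
    (x : Fin n → Fin (k + 1))
    (hx : ∀ v : Fin (k + 1), (Finset.univ.filter fun i => x i = v).card = k)
    (Y : Fin k → Fin (k + 1)) :
    ∃ S : Finset (Fin n), (n : ℝ) / (k : ℝ) ≤ S.card ∧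
      ∃ y' : Fin (k + 1),
        0 < ∑ i ∈ S, ((SimpleGraph.pathGraph (k + 1)).dist (x i) y' : ℝ) ∧
        (k : ℝ) * ∑ i ∈ S, ((SimpleGraph.pathGraph (k + 1)).dist (x i) y' : ℝ) ≤
          ∑ i ∈ S, treeClusterCost (SimpleGraph.pathGraph (k + 1)) Y (x i) := by
  obtain ⟨v, hv⟩ : ∃ v, ∀ j, Y j ≠ v := by
    by_contra! hY
    have := Fintype.card_le_of_surjective Y fun v => (hY v).imp fun _ => id
    simp at this
  have : Nontrivial (Fin (k + 1)) := Fin.nontrivial_iff_two_le.mpr (by omega)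
  obtain ⟨u, hadj⟩ := (pathGraph_preconnected (k + 1)).exists_adj_of_nontrivial v
  obtain ⟨i₀, hi₀⟩ : ∃ i₀, x i₀ = u := by
    obtain ⟨i₀, hi₀⟩ := card_pos.mp ((hx u).symm ▸ (by omega : 0 < k))
    exact ⟨i₀, (mem_filter.mp hi₀).2⟩
  have hdist := sum_dist_insert_of_adj x (hi₀ ▸ hadj.symm)
  refine ⟨insert i₀ ({i | x i = v} : Finset (Fin n)), ?_, v, by rw [hdist]; exact one_pos, ?_⟩
  · have hi₀v : i₀ ∉ ({i | x i = v} : Finset (Fin n)) := by simpa [hi₀] using hadj.ne.symm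
    rw [card_insert_of_notMem hi₀v, hx v, hn, div_le_iff₀ (by positivity)]
    push_cast
    linarith
  · rw [hdist, mul_one]
    have := card_le_sum_treeClusterCost (pathGraph_connected k) (by omega) x hv i₀
    rwa [hx v] at this
end

section
/- Let (X,d) be a metric space, let x : Fin n → X be agents with n ≥ 1, let M ⊆ X be a finite nonempty set of feasible center locations, and let k ≥ 1. Then there exists a k-clustering Y : Fin k → M that is a (1, 2⌈n/k⌉ + 1)-core clustering; that is, for every set S ⊆ Fin n with |S| ≥ n/k and every point y' ∈ M, one has (2⌈n/k⌉ + 1)·Σ_{i∈S} d(x_i, y') ≥ Σ_{i∈S} min_{j<k} d(x_i, Y_j). -/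
open Finset

lemma clusterCost_le {X : Type*} [MetricSpace X] {k : ℕ} (Y : Fin k → X) (p : X) (j : Fin k) :
    clusterCost Y p ≤ dist p (Y j) :=
  csInf_le ⟨0, by rintro _ ⟨j', rfl⟩; positivity⟩ ⟨j, rfl⟩

section OrderStatistic

variable {ι : Type*} {S : Finset ι} {m : ℕ}

/-- `f i₀` is an `m`-th smallest value of `f` on `S`. -/
lemma exists_mem_card_filter_lt_lt_le_card_filter_le {β : Type*} [LinearOrder β] (f : ι → β)
    (hm : 0 < m) (hmS : m ≤ #S) :
    ∃ i₀ ∈ S, #{i ∈ S | f i < f i₀} < m ∧ m ≤ #{i ∈ S | f i ≤ f i₀} := by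
  set P := {i ∈ S | m ≤ #{j ∈ S | f j ≤ f i}}
  have hP : P.Nonempty := by
    obtain ⟨i, hi, hmax⟩ := S.exists_max_image f (card_pos.mp (hm.trans_le hmS))
    refine ⟨i, mem_filter.mpr ⟨hi, ?_⟩⟩
    rwa [filter_true_of_mem hmax]
  obtain ⟨i₀, hi₀, hmin⟩ := P.exists_min_image f hP
  obtain ⟨hi₀S, hi₀m⟩ := mem_filter.mp hi₀
  refine ⟨i₀, hi₀S, ?_, hi₀m⟩
  by_contra! hB
  obtain ⟨i₁, hi₁, hmax⟩ :=
    exists_max_image {i ∈ S | f i < f i₀} f (card_pos.mp (hm.trans_le hB))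
  obtain ⟨hi₁S, hi₁lt⟩ := mem_filter.mp hi₁
  have hi₁P : i₁ ∈ P := by
    refine mem_filter.mpr ⟨hi₁S, hB.trans (card_le_card fun i hi => ?_)⟩
    exact mem_filter.mpr ⟨(mem_filter.mp hi).1, hmax i hi⟩
  exact (hmin i₁ hi₁P).not_gt hi₁lt

lemma card_mul_le_mul_sum_of_card_filter_lt {f : ι → ℝ} {D : ℝ} (hf : ∀ i ∈ S, 0 ≤ f i)
    (hD : 0 ≤ D) (hmS : m ≤ #S) (hlt : #{i ∈ S | f i < D} < m) :
    #S * D ≤ m * ∑ i ∈ S, f i := by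
  set B := {i ∈ S | f i < D}
  set A := {i ∈ S | ¬f i < D}
  have hcard : #B + #A = #S := card_filter_add_card_filter_not _
  -- `#S = #B + #A ≤ (m - 1) + #A ≤ m * #A`, as `#A ≥ 1`.
  have hSA : #S ≤ m * #A := by nlinarith
  have hA : #A • D ≤ ∑ i ∈ A, f i :=
    card_nsmul_le_sum _ _ _ fun i hi => not_lt.mp (mem_filter.mp hi).2
  have hAS : ∑ i ∈ A, f i ≤ ∑ i ∈ S, f i :=
    sum_le_sum_of_subset_of_nonneg (filter_subset _ _) fun i hi _ => hf i hi
  rw [nsmul_eq_mul] at hA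
  calc (#S : ℝ) * D ≤ (m * #A : ℕ) * D := by gcongr
    _ = m * (#A * D) := by push_cast; ring
    _ ≤ m * ∑ i ∈ S, f i := by gcongr; exact hA.trans hAS

end OrderStatistic

section Greedy

variable {ι X : Type*} [MetricSpace X] (x : ι → X) (M : Set X) (m : ℕ)

def CoversBalls {K : ℕ} (R : Finset ι) (Y : Fin K → X) : Prop :=
  ∀ y' ∈ M, ∀ T ⊆ R, #T = m → ∀ D, (∀ j ∈ T, dist (x j) y' ≤ D) →
    ∀ i ∈ R, ∃ j, dist (x i) (Y j) ≤ dist (x i) y' + 2 * D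

variable {x M}

lemma exists_smallest_ball (hMfin : M.Finite) (hMne : M.Nonempty) (R : Finset ι) {s : ℕ}
    (hs : s ≤ #R) :
    ∃ c ∈ M, ∃ G ⊆ R, #G = s ∧
      ∀ y' ∈ M, ∀ T ⊆ R, #T = s → ∀ i ∈ G, ∃ j ∈ T, dist (x i) c ≤ dist (x j) y' := by
  have hC : (hMfin.toFinset ×ˢ R.powersetCard s).Nonempty :=
    (hMfin.toFinset_nonempty.mpr hMne).product (powersetCard_nonempty.mpr hs)
  obtain ⟨⟨c, G⟩, hcG, hmin⟩ :=
    exists_min_image _ (fun p : X × Finset ι => p.2.sup fun i => nndist (x i) p.1) hC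
  obtain ⟨hc, hG⟩ := mem_product.mp hcG
  obtain ⟨hGR, hGs⟩ := mem_powersetCard.mp hG
  refine ⟨c, hMfin.mem_toFinset.mp hc, G, hGR, hGs, fun y' hy' T hTR hTs i hi => ?_⟩
  have hTG := hmin (y', T) (mem_product.mpr
    ⟨hMfin.mem_toFinset.mpr hy', mem_powersetCard.mpr ⟨hTR, hTs⟩⟩)
  have hT : T.Nonempty := card_pos.mp (hTs ▸ hGs ▸ card_pos.mpr ⟨i, hi⟩)
  obtain ⟨j, hj, hjsup⟩ := exists_mem_eq_sup T hT fun j => nndist (x j) y'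
  refine ⟨j, hj, ?_⟩
  rw [dist_nndist, dist_nndist, NNReal.coe_le_coe, ← hjsup]
  exact (le_sup (f := fun i => nndist (x i) c) hi).trans hTG

lemma coversBalls_cons [DecidableEq ι] {K : ℕ} {R G : Finset ι} {c : X} {Y : Fin K → X}
    (hc : ∀ y' ∈ M, ∀ T ⊆ R, #T = m → ∀ i ∈ G, ∃ j ∈ T, dist (x i) c ≤ dist (x j) y')
    (hY : CoversBalls x M m (R \ G) Y) : CoversBalls x M m R (Fin.cons c Y) := by
  intro y' hy' T hTR hTm D hD i hi
  by_cases hTG : ∃ j₀ ∈ T, j₀ ∈ G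
  · obtain ⟨j₀, hj₀T, hj₀G⟩ := hTG
    obtain ⟨j, hjT, hj⟩ := hc y' hy' T hTR hTm j₀ hj₀G
    refine ⟨0, ?_⟩
    calc dist (x i) c ≤ dist (x i) y' + dist y' (x j₀) + dist (x j₀) c := dist_triangle4 _ _ _ _
      _ ≤ dist (x i) y' + 2 * D := by
        rw [dist_comm y']
        linarith [hD j₀ hj₀T, hD j hjT]
  by_cases hiG : i ∈ G
  · obtain ⟨j, hjT, hj⟩ := hc y' hy' T hTR hTm i hiG
    refine ⟨0, show dist (x i) c ≤ _ from ?_⟩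
    linarith [hD j hjT, dist_nonneg (x := x j) (y := y'), dist_nonneg (x := x i) (y := y')]
  push Not at hTG
  have hTRG : T ⊆ R \ G := fun j hj => mem_sdiff.mpr ⟨hTR hj, hTG j hj⟩
  obtain ⟨j, hj⟩ := hY y' hy' T hTRG hTm D hD i (mem_sdiff.mpr ⟨hi, hiG⟩)
  exact ⟨j.succ, hj⟩

lemma exists_coversBalls [DecidableEq ι] (hMfin : M.Finite) (hMne : M.Nonempty) :
    ∀ (K : ℕ) (R : Finset ι), #R ≤ K * m → ∃ Y : Fin K → X, (∀ j, Y j ∈ M) ∧ CoversBalls x M m R Y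
  | 0, R, hR => by
    obtain rfl : R = ∅ := card_eq_zero.mp (by simpa using hR)
    exact ⟨finZeroElim, finZeroElim, fun _ _ T hT _ _ _ i hi => absurd hi (notMem_empty i)⟩
  | K + 1, R, hR => by
    obtain ⟨c, hc, G, hGR, hGs, hmin⟩ :=
      exists_smallest_ball (x := x) hMfin hMne R (min_le_right m #R)
    have hRG : #(R \ G) ≤ K * m := by
      rw [card_sdiff_of_subset hGR, hGs]
      rcases le_total m #R with h | h
      · rw [min_eq_left h]; rw [add_mul, one_mul] at hR; omega
      · rw [min_eq_right h]; omega
    obtain ⟨Y, hYM, hY⟩ := exists_coversBalls hMfin hMne K (R \ G) hRG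
    refine ⟨Fin.cons c Y, Fin.cases hc hYM, coversBalls_cons m (fun y' hy' T hTR hTm => ?_) hY⟩
    have : min m #R = m := min_eq_left (hTm ▸ card_le_card hTR)
    exact hmin y' hy' T hTR (hTm.trans this.symm)

end Greedy

theorem stmt9 {X : Type*} [MetricSpace X] {n k : ℕ} (hn : 0 < n) (hk : 0 < k)
    (x : Fin n → X) (M : Set X) (hMfin : M.Finite) (hMne : M.Nonempty) :
    ∃ Y : Fin k → X, (∀ j, Y j ∈ M) ∧
      ∀ S : Finset (Fin n), (n : ℝ) / (k : ℝ) ≤ S.card →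
        ∀ y' ∈ M,
          ∑ i ∈ S, clusterCost Y (x i) ≤
            (2 * (⌈(n : ℝ) / (k : ℝ)⌉₊ : ℝ) + 1) * ∑ i ∈ S, dist (x i) y' := by
  set m := ⌈(n : ℝ) / (k : ℝ)⌉₊
  have hm : 0 < m := Nat.ceil_pos.mpr (by positivity)
  have hnkm : n ≤ k * m := by
    have := (div_le_iff₀' (by positivity : (0 : ℝ) < k)).mp (Nat.le_ceil ((n : ℝ) / k))
    exact_mod_cast this
  obtain ⟨Y, hYM, hY⟩ := exists_coversBalls m hMfin hMne k (univ : Finset (Fin n))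
    (by simpa using hnkm)
  refine ⟨Y, hYM, fun S hS y' hy' => ?_⟩
  have hmS : m ≤ #S := Nat.ceil_le.mpr hS
  obtain ⟨i₀, -, hlt, hle⟩ :=
    exists_mem_card_filter_lt_lt_le_card_filter_le (fun i => dist (x i) y') hm hmS
  obtain ⟨T, hTS, hTm⟩ := exists_subset_card_eq hle
  have hcost : ∀ i ∈ S, clusterCost Y (x i) ≤ dist (x i) y' + 2 * dist (x i₀) y' := fun i _ => by
    obtain ⟨j, hj⟩ := hY y' hy' T (subset_univ T) hTm _ (fun j hj => (mem_filter.mp (hTS hj)).2)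
      i (mem_univ i)
    exact (clusterCost_le Y _ j).trans hj
  have hD := card_mul_le_mul_sum_of_card_filter_lt (fun i _ => dist_nonneg) dist_nonneg hmS hlt
  calc ∑ i ∈ S, clusterCost Y (x i) ≤ ∑ i ∈ S, (dist (x i) y' + 2 * dist (x i₀) y') :=
        sum_le_sum hcost
    _ = ∑ i ∈ S, dist (x i) y' + 2 * (#S * dist (x i₀) y') := by
        rw [sum_add_distrib, sum_const, nsmul_eq_mul]; ring
    _ ≤ (2 * (m : ℝ) + 1) * ∑ i ∈ S, dist (x i) y' := by linarith
end

section
/- Let (X,d) be a metric space, let x : Fin n → X be agents, and let k be an integer with n/2 ≤ k ≤ n − 2; take M = X (every point of the space is a feasible center location). Then there exists a k-clustering Y : Fin k → X that is a (1, 2)-core clustering; that is, for every set S ⊆ Fin n with |S| ≥ n/k and every point y' ∈ X, one has 2·Σ_{i∈S} d(x_i, y') ≥ Σ_{i∈S} min_{j<k} d(x_i, Y_j). -/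
open Finset

namespace Function

variable {α : Type*} [DecidableEq α]

/-- Allowing `f i ∉ A` is what lets the induction below remove points from `A`. -/
def Dominates (f : α → α) (C A : Finset α) : Prop :=
  ∀ i ∈ A, i ∈ C ∨ f i ∈ C ∨ f i ∉ A

variable {f : α → α} {C A : Finset α} {i : α}

lemma Dominates.of_erase (h : Dominates f C (A.erase i)) (hfi : f i ∉ A)
    (hpre : ∀ l ∈ A, f l ≠ i) : Dominates f C A := by
  intro l hl
  by_cases hli : l = i
  · exact .inr (.inr (hli ▸ hfi))
  rcases h l (mem_erase.mpr ⟨hli, hl⟩) with h | h | h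
  · exact .inl h
  · exact .inr (.inl h)
  · exact .inr (.inr fun hflA => h (mem_erase.mpr ⟨hpre l hl, hflA⟩))

lemma Dominates.insert_of_erase_pair (h : Dominates f C ((A.erase i).erase (f i)))
    (hpre : ∀ l ∈ A, f l = i → l = f i) : Dominates f (insert (f i) C) A := by
  intro l hl
  by_cases hli : l = i
  · exact .inr (.inl (hli ▸ mem_insert_self _ _))
  by_cases hlfi : l = f i
  · exact .inl (hlfi ▸ mem_insert_self _ _)
  rcases h l (mem_erase.mpr ⟨hlfi, mem_erase.mpr ⟨hli, hl⟩⟩) with h | h | h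
  · exact .inl (mem_insert_of_mem h)
  · exact .inr (.inl (mem_insert_of_mem h))
  by_cases hflfi : f l = f i
  · exact .inr (.inl (hflfi ▸ mem_insert_self _ _))
  refine .inr (.inr fun hflA => h (mem_erase.mpr ⟨hflfi, mem_erase.mpr ⟨?_, hflA⟩⟩))
  exact fun hfli => hlfi (hpre l hl hfli)

theorem exists_dominates (hf : ∀ i, f i ≠ i)
    (hcycle : ∀ A : Finset α, A.Nonempty → (∀ i ∈ A, f i ∈ A) → ∃ i ∈ A, f (f i) = i)
    (A : Finset α) : ∃ C, 2 * #C ≤ #A ∧ Dominates f C A := by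
  induction A using Finset.strongInduction with
  | H A ih =>
  rcases A.eq_empty_or_nonempty with rfl | hA
  · exact ⟨∅, by simp, by simp [Dominates]⟩
  have remove_pair : ∀ i ∈ A, f i ∈ A → (∀ l ∈ A, f l = i → l = f i) →
      ∃ C, 2 * #C ≤ #A ∧ Dominates f C A := by
    intro i hi hfi hpre
    have hfi' : f i ∈ A.erase i := mem_erase.mpr ⟨hf i, hfi⟩
    obtain ⟨C, hC, hdom⟩ := ih _ ((erase_ssubset hfi').trans (erase_ssubset hi))
    refine ⟨insert (f i) C, ?_, hdom.insert_of_erase_pair hpre⟩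
    have := card_insert_le (f i) C
    have := card_erase_add_one hi
    have := card_erase_add_one hfi'
    omega
  by_cases hleaf : ∃ i ∈ A, ∀ l ∈ A, f l ≠ i
  · obtain ⟨i, hi, hpre⟩ := hleaf
    by_cases hfi : f i ∈ A
    · exact remove_pair i hi hfi fun l hl h => absurd h (hpre l hl)
    · obtain ⟨C, hC, hdom⟩ := ih _ (erase_ssubset hi)
      exact ⟨C, hC.trans card_erase_le, hdom.of_erase hfi hpre⟩
  · -- every point of `A` has a preimage in `A`, so `f` permutes `A`
    push Not at hleaf
    have himage : A = A.image f := eq_of_subset_of_card_le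
      (fun i hi => by obtain ⟨l, hl, hli⟩ := hleaf i hi; exact mem_image.mpr ⟨l, hl, hli⟩)
      card_image_le
    have hmaps : ∀ i ∈ A, f i ∈ A := fun i hi => himage ▸ mem_image_of_mem f hi
    have hinj : Set.InjOn f A := injOn_of_card_image_eq (congrArg card himage.symm)
    obtain ⟨i, hi, hii⟩ := hcycle A hA hmaps
    exact remove_pair i hi (hmaps i hi) fun l hl h => hinj hl (hmaps i hi) (h.trans hii.symm)

theorem exists_card_le_forall_mem_or_mem [Fintype α] (hf : ∀ i, f i ≠ i)
    (hcycle : ∀ A : Finset α, A.Nonempty → (∀ i ∈ A, f i ∈ A) → ∃ i ∈ A, f (f i) = i) :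
    ∃ C : Finset α, 2 * #C ≤ Fintype.card α ∧ ∀ i, i ∈ C ∨ f i ∈ C := by
  obtain ⟨C, hC, hdom⟩ := exists_dominates hf hcycle univ
  refine ⟨C, hC, fun i => ?_⟩
  rcases hdom i (mem_univ i) with h | h | h
  · exact .inl h
  · exact .inr h
  · exact absurd (mem_univ _) h

end Function

lemma exists_fin_coe_subset_range {ι : Type*} [Nonempty ι] {C : Finset ι} {k : ℕ}
    (h : #C ≤ k) : ∃ g : Fin k → ι, ↑C ⊆ Set.range g := by
  classical
  refine ⟨Function.extend (Fin.castLE h) (fun j => (C.equivFin.symm j : ι))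
    (fun _ => Classical.arbitrary ι), fun c hc => ⟨Fin.castLE h (C.equivFin ⟨c, hc⟩), ?_⟩⟩
  rw [(Fin.castLE_injective h).extend_apply]
  simp

namespace Metric

variable {ι X : Type*} [Fintype ι] [LinearOrder ι] [Nontrivial ι] [PseudoMetricSpace X]

lemma exists_nearest (x : ι → X) (i : ι) :
    ∃ j, j ≠ i ∧ ∀ l, l ≠ i → toLex (dist (x i) (x j), j) ≤ toLex (dist (x i) (x l), l) := by
  obtain ⟨l, hl⟩ := exists_ne i
  obtain ⟨j, hj, hmin⟩ := (univ.erase i).exists_min_image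
    (fun l => toLex (dist (x i) (x l), l)) ⟨l, by simpa using hl⟩
  exact ⟨j, ne_of_mem_erase hj, fun l hl => hmin l (by simpa using hl)⟩

noncomputable def nearest (x : ι → X) (i : ι) : ι :=
  (exists_nearest x i).choose

variable (x : ι → X)

lemma nearest_ne (i : ι) : nearest x i ≠ i :=
  (exists_nearest x i).choose_spec.1

lemma toLex_nearest_le (i : ι) {l : ι} (hl : l ≠ i) :
    toLex (dist (x i) (x (nearest x i)), nearest x i) ≤ toLex (dist (x i) (x l), l) :=
  (exists_nearest x i).choose_spec.2 l hl

lemma dist_nearest_le (i : ι) {l : ι} (hl : l ≠ i) :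
    dist (x i) (x (nearest x i)) ≤ dist (x i) (x l) :=
  Prod.Lex.monotone_fst _ _ (toLex_nearest_le x i hl)

lemma nearest_le_of_dist_le (i : ι) {l : ι} (hl : l ≠ i)
    (h : dist (x i) (x l) ≤ dist (x i) (x (nearest x i))) : nearest x i ≤ l := by
  rcases Prod.Lex.toLex_le_toLex.mp (toLex_nearest_le x i hl) with h' | h'
  · exact absurd h (not_le.mpr h')
  · exact h'.2

lemma exists_nearest_nearest_eq {A : Finset ι} (hA : A.Nonempty)
    (hmaps : ∀ i ∈ A, nearest x i ∈ A) : ∃ i ∈ A, nearest x (nearest x i) = i := by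
  -- the lexicographic minimiser of `(dist (x i) (x (nearest x i)), i)` over `A` is such an `i`
  obtain ⟨i, hiA, hmin⟩ := A.exists_min_image
    (fun i => toLex (dist (x i) (x (nearest x i)), i)) hA
  set j := nearest x i
  have hjA : j ∈ A := hmaps i hiA
  have hji : j ≠ i := nearest_ne x i
  have hj : dist (x j) (x (nearest x j)) = dist (x i) (x j) := by
    refine le_antisymm ?_ ?_
    · simpa only [dist_comm] using dist_nearest_le x j hji.symm
    · exact Prod.Lex.monotone_fst _ _ (hmin j hjA)
  have hle : nearest x j ≤ i :=
    nearest_le_of_dist_le x j hji.symm (by rw [hj, dist_comm])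
  have hge : i ≤ nearest x j := by
    have hjj := nearest_ne x j
    rcases Prod.Lex.toLex_le_toLex.mp (hmin _ (hmaps j hjA)) with h | h
    · have := dist_nearest_le x (nearest x j) hjj.symm
      rw [dist_comm _ (x j), hj] at this
      exact absurd h (not_lt.mpr this)
    · exact h.2
  exact ⟨i, hiA, le_antisymm hle hge⟩

end Metric

section Cost

variable {ι X : Type*} [MetricSpace X] {k : ℕ}

lemma clusterCost_le_dist_of_mem_range {Y : Fin k → X} (p : X) {q : X} (hq : q ∈ Set.range Y) :
    clusterCost Y p ≤ dist p q := by
  obtain ⟨j, rfl⟩ := hq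
  exact csInf_le ⟨0, by rintro r ⟨j', rfl⟩; exact dist_nonneg⟩ ⟨j, rfl⟩

lemma clusterCost_le_dist_of_forall_mem_or_nearest_mem [Fintype ι] [LinearOrder ι] [Nontrivial ι]
    {x : ι → X} {g : Fin k → ι} (hdom : ∀ i, i ∈ Set.range g ∨ Metric.nearest x i ∈ Set.range g)
    {i l : ι} (hl : l ≠ i) : clusterCost (x ∘ g) (x i) ≤ dist (x i) (x l) := by
  rcases hdom i with ⟨j, hj⟩ | ⟨j, hj⟩
  · calc clusterCost (x ∘ g) (x i) ≤ dist (x i) (x i) :=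
          clusterCost_le_dist_of_mem_range _ ⟨j, by simp [hj]⟩
      _ ≤ dist (x i) (x l) := by rw [dist_self]; exact dist_nonneg
  · calc clusterCost (x ∘ g) (x i) ≤ dist (x i) (x (Metric.nearest x i)) :=
          clusterCost_le_dist_of_mem_range _ ⟨j, by simp [hj]⟩
      _ ≤ dist (x i) (x l) := Metric.dist_nearest_le x i hl

end Cost

lemma sum_le_two_mul_sum_dist {ι X : Type*} [PseudoMetricSpace X] {x : ι → X} {c : ι → ℝ}
    (hc : ∀ i l, l ≠ i → c i ≤ dist (x i) (x l)) {S : Finset ι} (hS : 1 < #S) (y : X) :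
    ∑ i ∈ S, c i ≤ 2 * ∑ i ∈ S, dist (x i) y := by
  classical
  obtain ⟨a, ha, hmin⟩ := S.exists_min_image (fun i => dist (x i) y) (card_pos.mp (by omega))
  obtain ⟨b, hb, hba⟩ := exists_mem_ne hS a
  have hb' : b ∈ S.erase a := mem_erase.mpr ⟨hba, hb⟩
  have hrest : ∀ i ∈ (S.erase a).erase b, c i ≤ 2 * dist (x i) y := by
    intro i hi
    have hia : a ≠ i := fun h => (ne_of_mem_erase (mem_of_mem_erase hi)) h.symm
    calc c i ≤ dist (x i) (x a) := hc i a hia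
      _ ≤ dist (x i) y + dist (x a) y := dist_triangle_right _ _ _
      _ ≤ 2 * dist (x i) y := by linarith [hmin i (mem_of_mem_erase (mem_of_mem_erase hi))]
  have hpair : c a + c b ≤ 2 * dist (x a) y + 2 * dist (x b) y := by
    have := (hc a b hba).trans (dist_triangle_right (x a) (x b) y)
    have := (hc b a hba.symm).trans (dist_triangle_right (x b) (x a) y)
    linarith
  rw [← add_sum_erase S _ ha, ← add_sum_erase _ _ hb', ← add_sum_erase S _ ha,
    ← add_sum_erase _ _ hb', mul_add, mul_add, mul_sum]
  linarith [sum_le_sum hrest]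

theorem stmt10 {X : Type*} [MetricSpace X] {n k : ℕ}
    (hk1 : (n : ℝ) / 2 ≤ (k : ℝ)) (hk2 : k + 2 ≤ n)
    (x : Fin n → X) :
    ∃ Y : Fin k → X,
      ∀ S : Finset (Fin n), (n : ℝ) / (k : ℝ) ≤ S.card →
        ∀ y' : X,
          ∑ i ∈ S, clusterCost Y (x i) ≤ 2 * ∑ i ∈ S, dist (x i) y' := by
  have : Nontrivial (Fin n) := Fin.nontrivial_iff_two_le.mpr (by omega)
  have hnk : n ≤ 2 * k := by exact_mod_cast (by linarith : (n : ℝ) ≤ 2 * k)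
  obtain ⟨C, hC, hdom⟩ := Function.exists_card_le_forall_mem_or_mem (Metric.nearest_ne x)
    fun A hA hmaps => Metric.exists_nearest_nearest_eq x hA hmaps
  obtain ⟨g, hg⟩ := exists_fin_coe_subset_range (k := k) (C := C) (by rw [Fintype.card_fin] at hC; omega)
  refine ⟨x ∘ g, fun S hS y' => sum_le_two_mul_sum_dist
    (fun i l hl => clusterCost_le_dist_of_forall_mem_or_nearest_mem
      (fun i => (hdom i).imp (@hg _) (@hg _)) hl) ?_ y'⟩
  have hk : (0 : ℝ) < k := by exact_mod_cast (show 0 < k by omega)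
  have : (1 : ℝ) < S.card :=
    (one_lt_div hk).mpr (by exact_mod_cast (show k < n by omega)) |>.trans_le hS
  exact_mod_cast this
end

section
/- Let n ≥ 1 and k ≥ 1 and let x : Fin n → ℝ be agents on the real line. Then there exists a k-clustering Y : Fin k → ℝ that is a (2, 1)-core clustering; that is, for every set S ⊆ Fin n with |S| ≥ 2n/k and every point y' ∈ ℝ, one has Σ_{i∈S} |x_i − y'| ≥ Σ_{i∈S} min_{j<k} |x_i − Y_j|. -/
open Finset
open scoped Interval

theorem clusterCost_eq_infDist {X : Type*} [MetricSpace X] {k : ℕ} (Y : Fin k → X) (p : X) :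
    clusterCost Y p = Metric.infDist p (Set.range Y) := by
  rw [Metric.infDist_eq_iInf, iInf, clusterCost]
  congr 1
  ext r
  simp

theorem clusterCost_add_clusterCost_le_of_mem_uIcc {k : ℕ} {Y : Fin k → ℝ} {p y : ℝ} {j : Fin k}
    (hj : Y j ∈ [[p, y]]) : clusterCost Y p + clusterCost Y y ≤ |p - y| := by
  simp only [clusterCost_eq_infDist]
  calc Metric.infDist p (Set.range Y) + Metric.infDist y (Set.range Y)
      ≤ dist p (Y j) + dist (Y j) y := by
        rw [dist_comm (Y j)]
        gcongr <;> exact Metric.infDist_le_dist_of_mem (Set.mem_range_self j)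
    _ = |p - y| := dist_add_dist_of_mem_segment (by rwa [segment_eq_uIcc])

theorem Finset.sum_le_sum_of_card_filter_le_card_filter_not {ι : Type*} {f g : ι → ℝ}
    {S : Finset ι} {p : ι → Prop} [DecidablePred p] {m : ℝ} (hm : 0 ≤ m)
    (hcard : #(S.filter p) ≤ #(S.filter (¬ p ·)))
    (hp : ∀ i ∈ S, p i → f i ≤ g i + m) (hnp : ∀ i ∈ S, ¬ p i → f i + m ≤ g i) :
    ∑ i ∈ S, f i ≤ ∑ i ∈ S, g i := by
  have hsum_p : ∑ i ∈ S.filter p, f i ≤ ∑ i ∈ S.filter p, g i + #(S.filter p) * m := by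
    rw [← nsmul_eq_mul, ← sum_const, ← sum_add_distrib]
    exact sum_le_sum fun i hi => hp i (mem_filter.1 hi).1 (mem_filter.1 hi).2
  have hsum_not_p : ∑ i ∈ S.filter (¬ p ·), f i + #(S.filter (¬ p ·)) * m
      ≤ ∑ i ∈ S.filter (¬ p ·), g i := by
    rw [← nsmul_eq_mul, ← sum_const, ← sum_add_distrib]
    exact sum_le_sum fun i hi => hnp i (mem_filter.1 hi).1 (mem_filter.1 hi).2
  have hcard_mul : (#(S.filter p) : ℝ) * m ≤ #(S.filter (¬ p ·)) * m := by
    gcongr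
  rw [← sum_filter_add_sum_filter_not S p f, ← sum_filter_add_sum_filter_not S p g]
  linarith

theorem sum_clusterCost_le_of_two_mul_card_le {ι : Type*} {k : ℕ} (Y : Fin k → ℝ) (x : ι → ℝ)
    (S : Finset ι) (y : ℝ) [DecidablePred fun i => ∀ j, Y j ∉ [[x i, y]]]
    (h : 2 * #(S.filter fun i => ∀ j, Y j ∉ [[x i, y]]) ≤ #S) :
    ∑ i ∈ S, clusterCost Y (x i) ≤ ∑ i ∈ S, |x i - y| := by
  have hcard := S.card_filter_add_card_filter_not fun i => ∀ j, Y j ∉ [[x i, y]]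
  refine sum_le_sum_of_card_filter_le_card_filter_not (p := fun i => ∀ j, Y j ∉ [[x i, y]])
    (m := clusterCost Y y) ?_ (by omega) (fun i _ _ => ?_) (fun i _ hi => ?_)
  · rw [clusterCost_eq_infDist]; exact Metric.infDist_nonneg
  · simp only [clusterCost_eq_infDist, ← Real.dist_eq]
    exact Metric.infDist_le_infDist_add_dist.trans_eq (add_comm _ _)
  · push Not at hi
    obtain ⟨j, hj⟩ := hi
    exact clusterCost_add_clusterCost_le_of_mem_uIcc hj

theorem card_le_of_forall_exists_mem_Icc {n : ℕ} {ι : Type*} {q : ι → Fin n} {w : ℕ}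
    {T : Finset (Fin n)} (hq : ∀ t ∈ T, ∃ j, t ≤ q j ∧ (q j : ℕ) ≤ t + w)
    (hT : ∀ t ∈ T, ∀ t' ∈ T, ∀ j, ¬ (t ≤ q j ∧ q j ≤ t')) : #T ≤ w := by
  obtain rfl | hne := T.eq_empty_or_nonempty
  · simp
  obtain ⟨j, hj₀, hjw⟩ := hq _ (T.min'_mem hne)
  have hsub : T ⊆ Ico (T.min' hne) (q j) := fun t ht =>
    mem_Ico.2 ⟨T.min'_le t ht, lt_of_not_ge fun h => hT _ (T.min'_mem hne) t ht j ⟨hj₀, h⟩⟩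
  calc #T ≤ #(Ico (T.min' hne) (q j)) := card_le_card hsub
    _ = q j - T.min' hne := Fin.card_Ico _ _
    _ ≤ w := by omega

theorem card_filter_forall_notMem_uIcc_le {n : ℕ} {ι : Type*} {s : Fin n → ℝ}
    (hs : Monotone s) {q : ι → Fin n} {w : ℕ} (hq : ∀ t, ∃ j, t ≤ q j ∧ (q j : ℕ) ≤ t + w) (y : ℝ)
    [DecidablePred fun t => ∀ j, s (q j) ∉ [[s t, y]]] :
    #(univ.filter fun t => ∀ j, s (q j) ∉ [[s t, y]]) ≤ w := by
  refine card_le_of_forall_exists_mem_Icc (fun t _ => hq t) fun t ht t' ht' j ⟨h, h'⟩ => ?_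
  have hmem : s (q j) ∈ [[s t, y]] ∪ [[y, s t']] :=
    Set.uIcc_subset_uIcc_union_uIcc (Set.mem_uIcc_of_le (hs h) (hs h'))
  rw [Set.uIcc_comm y] at hmem
  rcases hmem with hmem | hmem
  · exact (mem_filter.1 ht).2 j hmem
  · exact (mem_filter.1 ht').2 j hmem

theorem exists_mem_Icc_min_mul_sub_one {n k w t : ℕ} (hnk : n ≤ k * (w + 1)) (ht : t < n) :
    ∃ j < k, t ≤ min (n - 1) ((j + 1) * (w + 1) - 1) ∧
      min (n - 1) ((j + 1) * (w + 1) - 1) ≤ t + w := by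
  have hlo := Nat.div_mul_le_self t (w + 1)
  have hhi := Nat.lt_div_mul_add (a := t) (b := w + 1) (by omega)
  refine ⟨t / (w + 1), (Nat.div_lt_iff_lt_mul (Nat.succ_pos w)).2 (by linarith), ?_, ?_⟩ <;>
    rw [add_mul, one_mul] <;> omega

theorem stmt12 {n k : ℕ} (hn : 0 < n) (hk : 0 < k) (x : Fin n → ℝ) :
    ∃ Y : Fin k → ℝ,
      ∀ S : Finset (Fin n), 2 * (n : ℝ) / (k : ℝ) ≤ S.card →
        ∀ y' : ℝ, ∑ i ∈ S, clusterCost Y (x i) ≤ ∑ i ∈ S, |x i - y'| := by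
  classical
  let q : Fin k → Fin n := fun j => ⟨min (n - 1) ((j + 1) * (n / k + 1) - 1), by omega⟩
  have hq (t : Fin n) : ∃ j, t ≤ q j ∧ (q j : ℕ) ≤ t + n / k := by
    obtain ⟨j, hj, h⟩ := exists_mem_Icc_min_mul_sub_one (Nat.lt_mul_div_succ n hk).le t.isLt
    exact ⟨⟨j, hj⟩, h⟩
  let σ := Tuple.sort x
  refine ⟨fun j => x (σ (q j)), fun S hS y => sum_clusterCost_le_of_two_mul_card_le _ x S y ?_⟩
  have hgap : #(S.filter fun i => ∀ j, x (σ (q j)) ∉ [[x i, y]]) ≤ n / k := calc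
    _ ≤ #(univ.filter fun i => ∀ j, x (σ (q j)) ∉ [[x i, y]]) :=
      card_le_card (filter_subset_filter _ (subset_univ S))
    _ = #(univ.filter fun t => ∀ j, x (σ (q j)) ∉ [[x (σ t), y]]) :=
      (card_equiv σ (by simp)).symm
    _ ≤ n / k :=
      card_filter_forall_notMem_uIcc_le (s := fun t => x (σ t)) (Tuple.monotone_sort x) hq y
  have hgap' := (Nat.cast_le (α := ℝ).2 hgap).trans Nat.cast_div_le
  rw [← Nat.cast_le (α := ℝ), Nat.cast_mul, Nat.cast_two]
  linarith [mul_div_assoc (2 : ℝ) n k]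
end

section
/- For every real ε with 0 < ε ≤ 1, there exist a finite connected acyclic simple graph G (a tree, in fact a path) on a vertex set V, a positive integer k, and agents x : Fin n → V at vertices (with M = V and d the graph distance) such that no k-clustering Y : Fin k → V is a (2 − ε, 1)-core clustering; that is, for every Y : Fin k → V there exist a set S ⊆ Fin n with |S| ≥ (2 − ε)·n/k and a vertex y' ∈ V with Σ_{i∈S} d(x_i, y') < Σ_{i∈S} min_{j<k} d(x_i, Y_j). -/
/-!
Take the path on `a + 2` vertices with `a + 1` agents at every vertex and `k = a + 1`, where
`ε a ≥ 3`. By pigeonhole, any `a + 1` centers leave two vertices `v ≠ w` with a common nearest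
center `c`, say `d(w, c) ≤ d(v, c)`, which forces `v ≠ c`. The `2a + 1 ≥ (2 - ε) n / k` agents
at `v` and all but one at `w` deviate to `v`: their new cost `a d(w, v) ≤ a (d(w, c) + d(v, c))`
is strictly below their old cost `(a + 1) d(v, c) + a d(w, c)`.
-/

namespace SimpleGraph

theorem pathGraph_isBridge {n : ℕ} {v w : Fin n} (hvw : (v : ℕ) + 1 = w) :
    (pathGraph n).IsBridge s(v, w) := by
  rw [isBridge_iff]
  rintro ⟨p⟩
  obtain ⟨d, -, hd, hd'⟩ :=
    p.exists_boundary_dart {x | x ≤ v} (le_refl v)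
      (by simp only [Set.mem_ofPred_eq, Fin.le_def]; omega)
  obtain ⟨hadj, hne⟩ := deleteEdges_adj.mp d.adj
  simp only [Set.mem_ofPred_eq, Fin.le_def, not_le] at hd hd'
  have hfst : d.fst = v := by
    rcases pathGraph_adj.mp hadj with h | h <;> ext <;> omega
  have hsnd : d.snd = w := by
    rcases pathGraph_adj.mp hadj with h | h <;> ext <;> omega
  exact hne (by rw [hfst, hsnd]; rfl)

theorem pathGraph_isAcyclic (n : ℕ) : (pathGraph n).IsAcyclic := by
  rw [isAcyclic_iff_forall_adj_isBridge]
  intro v w hvw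
  rcases pathGraph_adj.mp hvw with h | h
  · exact pathGraph_isBridge h
  · rw [Sym2.eq_swap]
    exact pathGraph_isBridge h

theorem Connected.mul_dist_lt {V : Type*} {G : SimpleGraph V} (hG : G.Connected) {v w c : V}
    (hvw : v ≠ w) (hwc : G.dist w c ≤ G.dist v c) (a : ℕ) :
    a * G.dist w v < (a + 1) * G.dist v c + a * G.dist w c := by
  have hvc : 0 < G.dist v c := by
    refine Nat.pos_of_ne_zero fun h => hvw ?_
    rw [h, Nat.le_zero, hG.preconnected w c |>.dist_eq_zero_iff] at hwc
    rw [(hG.preconnected v c).dist_eq_zero_iff.mp h, hwc]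
  have htri : G.dist w v ≤ G.dist w c + G.dist v c := by
    simpa only [dist_comm (u := c)] using hG.dist_triangle (v := c)
  nlinarith

end SimpleGraph

open SimpleGraph

theorem exists_treeClusterCost_eq_dist {V : Type*} (G : SimpleGraph V) {k : ℕ} (hk : 0 < k)
    (Y : Fin k → V) (p : V) : ∃ j, treeClusterCost G Y p = G.dist p (Y j) := by
  have hne : (Set.range fun j => (G.dist p (Y j) : ℝ)).Nonempty := ⟨_, ⟨⟨0, hk⟩, rfl⟩⟩
  obtain ⟨j, hj⟩ := hne.csInf_mem (Set.finite_range _)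
  exact ⟨j, hj.symm⟩

theorem exists_ne_treeClusterCost_eq_dist {V : Type*} [Fintype V] (G : SimpleGraph V) {k : ℕ}
    (hk : 0 < k) (hkV : k < Fintype.card V) (Y : Fin k → V) :
    ∃ v w c, v ≠ w ∧ G.dist w c ≤ G.dist v c ∧
      treeClusterCost G Y v = G.dist v c ∧ treeClusterCost G Y w = G.dist w c := by
  choose j hj using exists_treeClusterCost_eq_dist G hk Y
  obtain ⟨v, w, hvw, hj_eq⟩ := Fintype.exists_ne_map_eq_of_card_lt j (by simpa using hkV)
  rcases le_total (G.dist w (Y (j v))) (G.dist v (Y (j v))) with h | h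
  · exact ⟨v, w, Y (j v), hvw, h, hj v, hj_eq ▸ hj w⟩
  · exact ⟨w, v, Y (j v), hvw.symm, h, hj_eq ▸ hj w, hj v⟩

section Coalition

open Finset

variable {α : Type*}

theorem disjoint_coalition {v w : α} (hvw : v ≠ w) (a : ℕ) :
    Disjoint ({v} ×ˢ univ : Finset (α × Fin (a + 1))) ({w} ×ˢ univ.erase 0) :=
  disjoint_product.mpr <| .inl <| disjoint_singleton.mpr hvw

variable [DecidableEq α]

/-- Agents are indexed by (vertex, copy); the coalition is all `a + 1` agents at `v` and all but
one of those at `w`. -/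
def coalition (v w : α) (a : ℕ) : Finset (α × Fin (a + 1)) :=
  {v} ×ˢ univ ∪ {w} ×ˢ univ.erase 0

variable {v w : α}

theorem card_coalition (hvw : v ≠ w) (a : ℕ) : #(coalition v w a) = 2 * a + 1 := by
  rw [coalition, card_union_of_disjoint (disjoint_coalition hvw a)]
  simp only [card_product, card_singleton, card_univ, Fintype.card_fin, mem_univ, card_erase_of_mem]
  omega

theorem sum_coalition (hvw : v ≠ w) (a : ℕ) (f : α → ℝ) :
    ∑ p ∈ coalition v w a, f p.1 = (a + 1) * f v + a * f w := by
  rw [coalition, sum_union (disjoint_coalition hvw a), sum_product, sum_product]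
  simp [card_erase_of_mem]

end Coalition

theorem stmt14_general (ε : ℝ) (hε0 : 0 < ε) :
    ∃ (m : ℕ) (G : SimpleGraph (Fin m)), G.Connected ∧ G.IsAcyclic ∧
      ∃ (n k : ℕ), 0 < n ∧ 0 < k ∧
        ∃ x : Fin n → Fin m,
          ∀ Y : Fin k → Fin m,
            ∃ S : Finset (Fin n), (2 - ε) * (n : ℝ) / (k : ℝ) ≤ S.card ∧
              ∃ y' : Fin m,
                ∑ i ∈ S, (G.dist (x i) y' : ℝ) < ∑ i ∈ S, treeClusterCost G Y (x i) := by
  set a := ⌈3 / ε⌉₊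
  have hεa : 3 ≤ ε * a := by
    have := Nat.le_ceil (3 / ε)
    rw [div_le_iff₀ hε0] at this
    linarith
  refine ⟨a + 2, pathGraph (a + 2), pathGraph_connected _, pathGraph_isAcyclic _,
    (a + 2) * (a + 1), a + 1, by positivity, a.succ_pos, fun i => (finProdFinEquiv.symm i).1,
    fun Y => ?_⟩
  obtain ⟨v, w, c, hvw, hwc, hv, hw⟩ :=
    exists_ne_treeClusterCost_eq_dist (pathGraph (a + 2)) a.succ_pos (by simp) Y
  have hsum (f : Fin (a + 2) → ℝ) :
      ∑ i ∈ (coalition v w a).map finProdFinEquiv.toEmbedding, f (finProdFinEquiv.symm i).1 =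
        (a + 1) * f v + a * f w := by
    simp only [Finset.sum_map, Equiv.coe_toEmbedding, Equiv.symm_apply_apply, sum_coalition hvw]
  refine ⟨(coalition v w a).map finProdFinEquiv.toEmbedding, ?_, v, ?_⟩
  · rw [Finset.card_map, card_coalition hvw]
    push_cast
    rw [mul_div_assoc, mul_div_cancel_right₀ _ (by positivity)]
    linarith
  · rw [hsum fun p => ((pathGraph (a + 2)).dist p v : ℝ), hsum (treeClusterCost _ Y), hv, hw,
      dist_self, Nat.cast_zero, mul_zero, zero_add]
    exact_mod_cast (pathGraph_connected (a + 1)).mul_dist_lt hvw hwc a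

theorem stmt14 (ε : ℝ) (hε0 : 0 < ε) (hε1 : ε ≤ 1) :
    ∃ (m : ℕ) (G : SimpleGraph (Fin m)), G.Connected ∧ G.IsAcyclic ∧
      ∃ (n k : ℕ), 0 < n ∧ 0 < k ∧
        ∃ x : Fin n → Fin m,
          ∀ Y : Fin k → Fin m,
            ∃ S : Finset (Fin n), (2 - ε) * (n : ℝ) / (k : ℝ) ≤ S.card ∧
              ∃ y' : Fin m,
                ∑ i ∈ S, (G.dist (x i) y' : ℝ) < ∑ i ∈ S, treeClusterCost G Y (x i) :=
  stmt14_general ε hε0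
end
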